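/- arXiv:1103.2102 — 9 statements merged into one kernel-verified Lean document; each statement's English description precedes it below -/
import Mathlib

section
/- For any finite sequence X = (x^1, …, x^n) in [0,1)^d, the star discrepancy satisfies d*∞(X) = max{ max_{y ∈ Γ̄(X)} ( V_y − A(y,X)/n ), max_{y ∈ Γ(X)} ( Ā(y,X)/n − V_y ) }. In particular, the supremum defining d*∞(X) is attained on the finite grids Γ̄(X) and Γ(X). -/
open Finset

noncomputable def starVol {d : ℕ} (y : Fin d → ℝ) : ℝ := ∏ j, y j

noncomputable def countOpen {n d : ℕ} (X : Fin n → Fin d → ℝ) (y : Fin d → ℝ) : ℕ :=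
  (Finset.univ.filter fun i => ∀ j, X i j < y j).card

noncomputable def countClosed {n d : ℕ} (X : Fin n → Fin d → ℝ) (y : Fin d → ℝ) : ℕ :=
  (Finset.univ.filter fun i => ∀ j, X i j ≤ y j).card

noncomputable def gammaBar {n d : ℕ} (X : Fin n → Fin d → ℝ) (j : Fin d) : Finset ℝ :=
  (Finset.univ.image fun i => X i j) ∪ {1}

noncomputable def gamma {n d : ℕ} (X : Fin n → Fin d → ℝ) (j : Fin d) : Finset ℝ :=
  Finset.univ.image fun i => X i j

/-!
Rounding a point `y ∈ (0,1]^d` up, coordinatewise, to the nearest point of `Γ̄(X)` does not change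
the set of points of `X` strictly below it and can only increase the volume; rounding it down to
the largest point of `Γ(X)` strictly below it keeps every point counted by `A(y,X)` in the closed
count and can only decrease the volume. So both one-sided deviations are dominated by grid values.
Conversely, the grid values are attained: on `Γ̄(X)` directly (or they vanish when a coordinate
is `0`), and on `Γ(X)` as limits of `A(y+δ,X)/n - V_{y+δ}` as `δ → 0⁺`.
-/

open Filter Topology

namespace Finset

variable {α : Type*} [LinearOrder α]

lemma exists_mem_ge_forall_lt_imp_lt (s : Finset α) {t : α} (h : ∃ u ∈ s, t ≤ u) :
    ∃ u ∈ s, t ≤ u ∧ ∀ v ∈ s, v < u → v < t := by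
  have hne : (s.filter (t ≤ ·)).Nonempty := let ⟨u, hu, htu⟩ := h; ⟨u, mem_filter.2 ⟨hu, htu⟩⟩
  obtain ⟨hmem, hge⟩ := mem_filter.1 (min'_mem _ hne)
  refine ⟨_, hmem, hge, fun v hv hvu => lt_of_not_ge fun htv => ?_⟩
  exact (min'_le _ v (mem_filter.2 ⟨hv, htv⟩)).not_gt hvu

lemma exists_mem_lt_forall_lt_imp_le (s : Finset α) {t : α} (h : ∃ u ∈ s, u < t) :
    ∃ u ∈ s, u < t ∧ ∀ v ∈ s, v < t → v ≤ u := by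
  have hne : (s.filter (· < t)).Nonempty := let ⟨u, hu, hut⟩ := h; ⟨u, mem_filter.2 ⟨hu, hut⟩⟩
  obtain ⟨hmem, hlt⟩ := mem_filter.1 (max'_mem _ hne)
  exact ⟨_, hmem, hlt, fun v hv hvt => le_max' _ v (mem_filter.2 ⟨hv, hvt⟩)⟩

end Finset

section StarDiscrepancy

variable {n d : ℕ} {X : Fin n → Fin d → ℝ}

variable (X) in
def discrepancySet : Set ℝ :=
  {r : ℝ | ∃ y : Fin d → ℝ, (∀ j, y j ∈ Set.Ioc (0 : ℝ) 1) ∧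
    r = |starVol y - (countOpen X y : ℝ) / n|}

lemma starVol_le_starVol {y z : Fin d → ℝ} (hy : 0 ≤ y) (h : y ≤ z) : starVol y ≤ starVol z :=
  prod_le_prod (fun j _ => hy j) fun j _ => h j

lemma countClosed_le_countOpen {y z : Fin d → ℝ} (h : ∀ j, y j < z j) :
    countClosed X y ≤ countOpen X z :=
  card_le_card <| monotone_filter_right _ fun _ _ hi j => (hi j).trans_lt (h j)

lemma exists_mem_gammaBar_ge_countOpen_le {y : Fin d → ℝ} (hy : ∀ j, y j ≤ 1) :
    ∃ z ∈ Fintype.piFinset fun j => gammaBar X j, y ≤ z ∧ countOpen X z ≤ countOpen X y := by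
  choose z hz hyz hgap using fun j => (gammaBar X j).exists_mem_ge_forall_lt_imp_lt
    ⟨1, mem_union_right _ (mem_singleton_self 1), hy j⟩
  refine ⟨z, Fintype.mem_piFinset.2 hz, hyz, card_le_card <| monotone_filter_right _ ?_⟩
  exact fun i _ hi j => hgap j _ (mem_union_left _ (mem_image_of_mem _ (mem_univ i))) (hi j)

lemma exists_mem_gamma_lt_countOpen_le {y : Fin d → ℝ} (hA : 0 < countOpen X y) :
    ∃ z ∈ Fintype.piFinset fun j => gamma X j,
      (∀ j, z j < y j) ∧ countOpen X y ≤ countClosed X z := by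
  obtain ⟨i₀, hi₀⟩ := card_pos.1 hA
  choose z hz hzy hmax using fun j => (gamma X j).exists_mem_lt_forall_lt_imp_le
    ⟨X i₀ j, mem_image_of_mem _ (mem_univ _), (mem_filter.1 hi₀).2 j⟩
  refine ⟨z, Fintype.mem_piFinset.2 hz, hzy, card_le_card <| monotone_filter_right _ ?_⟩
  exact fun i _ hi j => hmax j _ (mem_image_of_mem _ (mem_univ i)) (hi j)

lemma sub_le_sup'_gammaBar {y : Fin d → ℝ} (hy₀ : 0 ≤ y) (hy₁ : ∀ j, y j ≤ 1)
    (h : (Fintype.piFinset fun j => gammaBar X j).Nonempty) :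
    starVol y - (countOpen X y : ℝ) / n ≤
      (Fintype.piFinset fun j => gammaBar X j).sup' h
        fun z => starVol z - (countOpen X z : ℝ) / n := by
  obtain ⟨z, hz, hyz, hcount⟩ := exists_mem_gammaBar_ge_countOpen_le (X := X) hy₁
  refine le_trans ?_ (le_sup' (fun z => starVol z - (countOpen X z : ℝ) / n) hz)
  exact sub_le_sub (starVol_le_starVol hy₀ hyz) (by gcongr)

lemma sub_le_sup'_gamma (hX₀ : ∀ i j, 0 ≤ X i j) {y : Fin d → ℝ} (hA : 0 < countOpen X y)
    (h : (Fintype.piFinset fun j => gamma X j).Nonempty) :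
    (countOpen X y : ℝ) / n - starVol y ≤
      (Fintype.piFinset fun j => gamma X j).sup' h
        fun z => (countClosed X z : ℝ) / n - starVol z := by
  obtain ⟨z, hz, hzy, hcount⟩ := exists_mem_gamma_lt_countOpen_le hA
  refine le_trans ?_ (le_sup' (fun z => (countClosed X z : ℝ) / n - starVol z) hz)
  have hz₀ : 0 ≤ z := fun j => by
    obtain ⟨i, -, hi⟩ := mem_image.1 (Fintype.mem_piFinset.1 hz j)
    exact hi ▸ hX₀ i j
  exact sub_le_sub (by gcongr) (starVol_le_starVol hz₀ fun j => (hzy j).le)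

lemma sup'_gammaBar_nonneg (hn : 0 < n) (hX₁ : ∀ i j, X i j < 1)
    (h : (Fintype.piFinset fun j => gammaBar X j).Nonempty) :
    0 ≤ (Fintype.piFinset fun j => gammaBar X j).sup' h
      fun z => starVol z - (countOpen X z : ℝ) / n := by
  have hone : (fun _ => 1) ∈ Fintype.piFinset fun j => gammaBar X j :=
    Fintype.mem_piFinset.2 fun j => mem_union_right _ (mem_singleton_self 1)
  refine le_trans (le_of_eq ?_) (le_sup' (fun z => starVol z - (countOpen X z : ℝ) / n) hone)
  have hA : countOpen X (fun _ => 1) = n := by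
    rw [countOpen, filter_true_of_mem fun i _ j => hX₁ i j, card_univ, Fintype.card_fin]
  simp [starVol, hA, hn.ne']

lemma forall_mem_discrepancySet_le (hn : 0 < n) (hX : ∀ i j, X i j ∈ Set.Ico (0 : ℝ) 1)
    (h₁ : (Fintype.piFinset fun j => gammaBar X j).Nonempty)
    (h₂ : (Fintype.piFinset fun j => gamma X j).Nonempty) :
    ∀ r ∈ discrepancySet X, r ≤ max
      ((Fintype.piFinset fun j => gammaBar X j).sup' h₁
        fun z => starVol z - (countOpen X z : ℝ) / n)
      ((Fintype.piFinset fun j => gamma X j).sup' h₂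
        fun z => (countClosed X z : ℝ) / n - starVol z) := by
  rintro _ ⟨y, hy, rfl⟩
  have hy₀ : 0 ≤ y := fun j => (hy j).1.le
  refine abs_sub_le_iff.2 ⟨(sub_le_sup'_gammaBar hy₀ (fun j => (hy j).2) h₁).trans
    (le_max_left _ _), ?_⟩
  rcases (countOpen X y).eq_zero_or_pos with hA | hA
  · rw [hA, Nat.cast_zero, zero_div, zero_sub]
    exact (neg_nonpos.2 (prod_nonneg fun j _ => hy₀ j)).trans
      ((sup'_gammaBar_nonneg hn (fun i j => (hX i j).2) h₁).trans (le_max_left _ _))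
  · exact (sub_le_sup'_gamma (fun i j => (hX i j).1) hA h₂).trans (le_max_right _ _)

lemma sup'_gammaBar_le_sSup (hX : ∀ i j, X i j ∈ Set.Ico (0 : ℝ) 1)
    (hS : BddAbove (discrepancySet X))
    (h : (Fintype.piFinset fun j => gammaBar X j).Nonempty) :
    (Fintype.piFinset fun j => gammaBar X j).sup' h
      (fun z => starVol z - (countOpen X z : ℝ) / n) ≤ sSup (discrepancySet X) := by
  refine sup'_le _ _ fun y hy => ?_
  have hy : ∀ j, y j ∈ Set.Icc (0 : ℝ) 1 := fun j => by
    rcases mem_union.1 (Fintype.mem_piFinset.1 hy j) with hj | hj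
    · obtain ⟨i, -, hi⟩ := mem_image.1 hj
      exact hi ▸ ⟨(hX i j).1, (hX i j).2.le⟩
    · rw [mem_singleton.1 hj]
      exact ⟨zero_le_one, le_rfl⟩
  by_cases hpos : ∀ j, 0 < y j
  · exact le_csSup_of_le hS ⟨y, fun j => ⟨hpos j, (hy j).2⟩, rfl⟩ (le_abs_self _)
  obtain ⟨j, hj⟩ := not_forall.1 hpos
  have hyj : y j = 0 := le_antisymm (not_lt.1 hj) (hy j).1
  have hV : starVol y = 0 := prod_eq_zero (mem_univ j) hyj
  have hA : countOpen X y = 0 := card_eq_zero.2 <| filter_eq_empty_iff.2 fun i _ hi =>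
    (hX i j).1.not_gt (hyj ▸ hi j)
  rw [hV, hA, Nat.cast_zero, zero_div, sub_zero]
  exact Real.sSup_nonneg fun _ ⟨_, _, hr⟩ => hr ▸ abs_nonneg _

lemma sup'_gamma_le_sSup (hX : ∀ i j, X i j ∈ Set.Ico (0 : ℝ) 1)
    (hS : BddAbove (discrepancySet X))
    (h : (Fintype.piFinset fun j => gamma X j).Nonempty) :
    (Fintype.piFinset fun j => gamma X j).sup' h
      (fun z => (countClosed X z : ℝ) / n - starVol z) ≤ sSup (discrepancySet X) := by
  refine sup'_le _ _ fun y hy => ?_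
  have hy : ∀ j, y j ∈ Set.Ico (0 : ℝ) 1 := fun j => by
    obtain ⟨i, -, hi⟩ := mem_image.1 (Fintype.mem_piFinset.1 hy j)
    exact hi ▸ hX i j
  have hlim : Tendsto (fun δ : ℝ => (countClosed X y : ℝ) / n - starVol fun j => y j + δ)
      (𝓝[>] 0) (𝓝 ((countClosed X y : ℝ) / n - starVol y)) := by
    have hc : Continuous fun δ : ℝ => (countClosed X y : ℝ) / n - starVol fun j => y j + δ := by
      unfold starVol
      fun_prop
    simpa using (hc.tendsto 0).mono_left nhdsWithin_le_nhds
  have hsmall : ∀ᶠ δ in 𝓝[>] (0 : ℝ), ∀ j, δ < 1 - y j :=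
    eventually_all.2 fun j => (eventually_lt_nhds (sub_pos.2 (hy j).2)).filter_mono
      nhdsWithin_le_nhds
  refine le_of_tendsto hlim ?_
  filter_upwards [self_mem_nhdsWithin, hsmall] with δ (hδ : 0 < δ) hδ₁
  have hmem : ∀ j, y j + δ ∈ Set.Ioc (0 : ℝ) 1 := fun j =>
    ⟨by linarith [(hy j).1], by linarith [hδ₁ j]⟩
  refine le_csSup_of_le hS ⟨_, hmem, rfl⟩ ?_
  have : (countClosed X y : ℝ) / n ≤ (countOpen X fun j => y j + δ : ℝ) / n := by
    gcongr
    exact countClosed_le_countOpen fun j => lt_add_of_pos_right _ hδ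
  rw [abs_sub_comm]
  exact (sub_le_sub_right this _).trans (le_abs_self _)

end StarDiscrepancy

/-- The star discrepancy (the sup over `(0,1]^d` of `|V_y - A(y,X)/n|`) is attained on the
finite grids: it equals the maximum of `V_y - A(y,X)/n` over the grid `Γ̄(X)` and of
`Ā(y,X)/n - V_y` over the grid `Γ(X)`. -/
theorem stmt0 (n d : ℕ) (hn : 0 < n)
    (X : Fin n → Fin d → ℝ) (hX : ∀ i j, X i j ∈ Set.Ico (0 : ℝ) 1) :
    sSup {r : ℝ | ∃ y : Fin d → ℝ, (∀ j, y j ∈ Set.Ioc (0 : ℝ) 1) ∧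
        r = |starVol y - (countOpen X y : ℝ) / n|} =
      max
        ((Fintype.piFinset fun j => gammaBar X j).sup'
          ⟨fun _ => 1, by simp [Fintype.mem_piFinset, gammaBar]⟩
          fun y => starVol y - (countOpen X y : ℝ) / n)
        ((Fintype.piFinset fun j => gamma X j).sup'
          ⟨fun j => X ⟨0, hn⟩ j, by
            simp only [Fintype.mem_piFinset, gamma, Finset.mem_image, Finset.mem_univ, true_and]
            exact fun j => ⟨⟨0, hn⟩, rfl⟩⟩
          fun y => (countClosed X y : ℝ) / n - starVol y) := by
  have hub := forall_mem_discrepancySet_le hn hX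
    ⟨fun _ => 1, by simp [Fintype.mem_piFinset, gammaBar]⟩
    ⟨fun j => X ⟨0, hn⟩ j, Fintype.mem_piFinset.2 fun j => mem_image_of_mem _ (mem_univ _)⟩
  have hS : BddAbove (discrepancySet X) := ⟨_, hub⟩
  have hne : (discrepancySet X).Nonempty := ⟨_, fun _ => 1, fun _ => ⟨one_pos, le_rfl⟩, rfl⟩
  exact le_antisymm (csSup_le hne hub)
    (max_le (sup'_gammaBar_le_sSup hX hS _) (sup'_gamma_le_sSup hX hS _))
end

section
/- Let X = (x^1,…,x^n) be an n-point configuration in [0,1)^d. Then the sets Δ(X), Δ̄(X), and Δ*(X) = Δ(X) ∪ Δ̄(X) are non-empty subsets of the grid Γ̄(X). Furthermore, sup_{y∈[0,1]^d} δ(y) = max_{y∈Δ(X)} δ(y), sup_{y∈[0,1]^d} δ̄(y) = max_{y∈Δ̄(X)} δ̄(y), and sup_{y∈[0,1]^d} δ*(y) = max_{y∈Δ*(X)} δ*(y). -/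
open Finset

/-- δ(y) = V_y - A(y,X)/n -/
noncomputable def delta {n d : ℕ} (X : Fin n → Fin d → ℝ) (y : Fin d → ℝ) : ℝ :=
  starVol y - (countOpen X y : ℝ) / n

/-- δ̄(y) = Ā(y,X)/n - V_y -/
noncomputable def deltaBar {n d : ℕ} (X : Fin n → Fin d → ℝ) (y : Fin d → ℝ) : ℝ :=
  (countClosed X y : ℝ) / n - starVol y

/-- `y` is δ(X)-critical: for every `j`, either the surface `S_j(y)` contains a point of `X`
(i.e. some `x^i` has `x^i_j = y_j` and `x^i_l < y_l` for `l ≠ j`), or `y_j = 1`. -/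
def deltaCriticalPt {n d : ℕ} (X : Fin n → Fin d → ℝ) (y : Fin d → ℝ) : Prop :=
  ∀ j : Fin d, (∃ i : Fin n, X i j = y j ∧ ∀ l : Fin d, l ≠ j → X i l < y l) ∨ y j = 1

/-- `y` is δ̄(X)-critical: for every `j`, the closed surface `S̄_j(y)` contains a point of `X`
(i.e. some `x^i` has `x^i_j = y_j` and `x^i_l ≤ y_l` for `l ≠ j`). -/
def deltaBarCriticalPt {n d : ℕ} (X : Fin n → Fin d → ℝ) (y : Fin d → ℝ) : Prop :=
  ∀ j : Fin d, ∃ i : Fin n, X i j = y j ∧ ∀ l : Fin d, l ≠ j → X i l ≤ y l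

/-- The set Δ(X) of δ(X)-critical points of the unit cube. -/
def criticalSet {n d : ℕ} (X : Fin n → Fin d → ℝ) : Set (Fin d → ℝ) :=
  {y | (∀ j, y j ∈ Set.Icc (0 : ℝ) 1) ∧ deltaCriticalPt X y}

/-- The set Δ̄(X) of δ̄(X)-critical points of the unit cube. -/
def criticalBarSet {n d : ℕ} (X : Fin n → Fin d → ℝ) : Set (Fin d → ℝ) :=
  {y | (∀ j, y j ∈ Set.Icc (0 : ℝ) 1) ∧ deltaBarCriticalPt X y}

section Aux

variable {n d : ℕ} {X : Fin n → Fin d → ℝ}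

lemma one_mem_gammaBar (X : Fin n → Fin d → ℝ) (j : Fin d) : (1:ℝ) ∈ gammaBar X j := by
  simp [gammaBar]

lemma X_mem_gammaBar (X : Fin n → Fin d → ℝ) (i : Fin n) (j : Fin d) :
    X i j ∈ gammaBar X j := by
  simp only [gammaBar, mem_union, mem_image, mem_singleton]
  exact Or.inl ⟨i, mem_univ i, rfl⟩

lemma gammaBar_le_one (hX : ∀ i j, X i j ∈ Set.Ico (0:ℝ) 1) {j : Fin d} {γ : ℝ}
    (h : γ ∈ gammaBar X j) : γ ≤ 1 := by
  simp only [gammaBar, mem_union, mem_image, mem_singleton] at h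
  rcases h with ⟨i, -, rfl⟩ | rfl
  · exact le_of_lt (hX i j).2
  · exact le_refl 1

lemma gammaBar_nonneg (hX : ∀ i j, X i j ∈ Set.Ico (0:ℝ) 1) {j : Fin d} {γ : ℝ}
    (h : γ ∈ gammaBar X j) : 0 ≤ γ := by
  simp only [gammaBar, mem_union, mem_image, mem_singleton] at h
  rcases h with ⟨i, -, rfl⟩ | rfl
  · exact (hX i j).1
  · exact zero_le_one

lemma countOpen_congr {y z : Fin d → ℝ}
    (h : ∀ i, (∀ j, X i j < y j) ↔ (∀ j, X i j < z j)) :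
    countOpen X y = countOpen X z := by
  unfold countOpen
  congr 1
  exact Finset.filter_congr (fun i _ => by simpa using h i)

lemma countClosed_congr {y z : Fin d → ℝ}
    (h : ∀ i, (∀ j, X i j ≤ y j) ↔ (∀ j, X i j ≤ z j)) :
    countClosed X y = countClosed X z := by
  unfold countClosed
  congr 1
  exact Finset.filter_congr (fun i _ => by simpa using h i)

lemma starVol_mono {y z : Fin d → ℝ} (h0 : ∀ j, 0 ≤ y j) (h : ∀ j, y j ≤ z j) :
    starVol y ≤ starVol z :=
  Finset.prod_le_prod (fun j _ => h0 j) (fun j _ => h j)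

lemma starVol_nonneg {y : Fin d → ℝ} (h0 : ∀ j, 0 ≤ y j) : 0 ≤ starVol y :=
  Finset.prod_nonneg (fun j _ => h0 j)

lemma starVol_le_one {y : Fin d → ℝ} (h0 : ∀ j, 0 ≤ y j) (h1 : ∀ j, y j ≤ 1) :
    starVol y ≤ 1 :=
  Finset.prod_le_one (fun j _ => h0 j) (fun j _ => h1 j)

end Aux

section DescA

variable {n d : ℕ} {X : Fin n → Fin d → ℝ}

/-- measure for the upward descent -/
noncomputable def measA {n d : ℕ} (X : Fin n → Fin d → ℝ) (y : Fin d → ℝ) : ℕ :=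
  ∑ j, ((gammaBar X j).filter (fun γ => y j < γ)).card

lemma stepA (hX : ∀ i j, X i j ∈ Set.Ico (0:ℝ) 1) (y : Fin d → ℝ)
    (hy : ∀ j, y j ∈ Set.Icc (0:ℝ) 1) (hc : ¬ deltaCriticalPt X y) :
    ∃ y', (∀ j, y' j ∈ Set.Icc (0:ℝ) 1) ∧ measA X y' < measA X y ∧
      delta X y ≤ delta X y' := by
  rw [deltaCriticalPt] at hc
  push_neg at hc
  obtain ⟨j, hj1, hj2⟩ := hc
  have hylt : y j < 1 := lt_of_le_of_ne (hy j).2 hj2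
  set S := (gammaBar X j).filter (fun γ => y j < γ) with hS
  have hSne : S.Nonempty := ⟨1, by simp [hS, one_mem_gammaBar X j, hylt]⟩
  set γ' := S.min' hSne with hγ'
  have hγ'S : γ' ∈ S := S.min'_mem hSne
  have hγ'G : γ' ∈ gammaBar X j := (mem_filter.1 hγ'S).1
  have hγ'gt : y j < γ' := (mem_filter.1 hγ'S).2
  set y' := Function.update y j γ' with hy'
  have hle : ∀ l, y l ≤ y' l := by
    intro l
    by_cases h : l = j
    · subst h; rw [hy', Function.update_self]; exact le_of_lt hγ'gt
    · rw [hy', Function.update_of_ne h]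
  have hy'j : y' j = γ' := by rw [hy', Function.update_self]
  refine ⟨y', ?_, ?_, ?_⟩
  · intro l
    by_cases h : l = j
    · subst h
      rw [hy'j]
      exact ⟨gammaBar_nonneg hX hγ'G, gammaBar_le_one hX hγ'G⟩
    · rw [hy', Function.update_of_ne h]; exact hy l
  · -- measure decreases
    unfold measA
    refine Finset.sum_lt_sum (fun l _ => ?_) ⟨j, mem_univ j, ?_⟩
    · apply Finset.card_le_card
      intro γ hγ
      rw [mem_filter] at hγ ⊢
      exact ⟨hγ.1, lt_of_le_of_lt (hle l) hγ.2⟩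
    · apply Finset.card_lt_card
      rw [Finset.ssubset_iff_of_subset]
      · exact ⟨γ', by rw [mem_filter]; exact ⟨hγ'G, hγ'gt⟩, by simp [hy'j]⟩
      · intro γ hγ
        rw [mem_filter] at hγ ⊢
        exact ⟨hγ.1, lt_of_le_of_lt (hle j) hγ.2⟩
  · -- delta increases
    have hcount : countOpen X y' = countOpen X y := by
      apply countOpen_congr
      intro i
      constructor
      · intro h l
        by_cases hl : l = j
        · subst hl
          by_contra hcon
          push_neg at hcon
          rcases eq_or_lt_of_le hcon with heq | hlt
          · obtain ⟨l', hl', hge⟩ := hj1 i heq.symm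
            have := h l'
            rw [hy', Function.update_of_ne hl'] at this
            linarith
          · have hmem : X i l ∈ S := by
              rw [hS, mem_filter]; exact ⟨X_mem_gammaBar X i l, hlt⟩
            have := S.min'_le _ hmem
            have h2 := h l
            rw [hy'j] at h2
            linarith
        · have := h l
          rwa [hy', Function.update_of_ne hl] at this
      · intro h l
        exact lt_of_lt_of_le (h l) (hle l)
    unfold delta
    rw [hcount]
    have : starVol y ≤ starVol y' := starVol_mono (fun l => (hy l).1) hle
    linarith

lemma descentA (hX : ∀ i j, X i j ∈ Set.Ico (0:ℝ) 1) :
    ∀ N (y : Fin d → ℝ), measA X y ≤ N → (∀ j, y j ∈ Set.Icc (0:ℝ) 1) →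
    ∃ y' ∈ criticalSet X, delta X y ≤ delta X y' := by
  intro N
  induction N with
  | zero =>
    intro y hm hy
    by_cases hc : deltaCriticalPt X y
    · exact ⟨y, ⟨hy, hc⟩, le_refl _⟩
    · obtain ⟨y', _, hlt, _⟩ := stepA hX y hy hc
      omega
  | succ N ih =>
    intro y hm hy
    by_cases hc : deltaCriticalPt X y
    · exact ⟨y, ⟨hy, hc⟩, le_refl _⟩
    · obtain ⟨y', hy1, hlt, hdel⟩ := stepA hX y hy hc
      obtain ⟨y'', hy''c, hd2⟩ := ih y' (by omega) hy1
      exact ⟨y'', hy''c, le_trans hdel hd2⟩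

lemma maxA (hX : ∀ i j, X i j ∈ Set.Ico (0:ℝ) 1) (z : Fin d → ℝ)
    (hz : ∀ j, z j ∈ Set.Icc (0:ℝ) 1) :
    ∃ y' ∈ criticalSet X, delta X z ≤ delta X y' := by
  -- round z up to the grid
  set y := fun j => ((gammaBar X j).filter (fun γ => z j ≤ γ)).min'
    ⟨1, by simp [one_mem_gammaBar X j, (hz j).2]⟩ with hy
  have hymem : ∀ j, y j ∈ (gammaBar X j).filter (fun γ => z j ≤ γ) := fun j =>
    Finset.min'_mem _ _
  have hyG : ∀ j, y j ∈ gammaBar X j := fun j => (mem_filter.1 (hymem j)).1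
  have hyge : ∀ j, z j ≤ y j := fun j => (mem_filter.1 (hymem j)).2
  have hycube : ∀ j, y j ∈ Set.Icc (0:ℝ) 1 := fun j =>
    ⟨gammaBar_nonneg hX (hyG j), gammaBar_le_one hX (hyG j)⟩
  have hdel : delta X z ≤ delta X y := by
    have hcount : countOpen X y = countOpen X z := by
      apply countOpen_congr
      intro i
      constructor
      · intro h j
        by_contra hcon
        push_neg at hcon
        have hmem : X i j ∈ (gammaBar X j).filter (fun γ => z j ≤ γ) := by
          rw [mem_filter]; exact ⟨X_mem_gammaBar X i j, hcon⟩
        have := Finset.min'_le _ _ hmem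
        have h2 := h j
        rw [hy] at h2
        linarith [h j]
      · intro h j
        exact lt_of_lt_of_le (h j) (hyge j)
    unfold delta
    rw [hcount]
    have : starVol z ≤ starVol y := starVol_mono (fun l => (hz l).1) hyge
    linarith
  obtain ⟨y', hc, hd⟩ := descentA hX (measA X y) y (le_refl _) hycube
  exact ⟨y', hc, le_trans hdel hd⟩

end DescA

section DescB

variable {n d : ℕ} {X : Fin n → Fin d → ℝ}

noncomputable def measB {n d : ℕ} (X : Fin n → Fin d → ℝ) (y : Fin d → ℝ) : ℕ :=
  ∑ j, ((gammaBar X j).filter (fun γ => γ < y j)).card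

/-- the top point ŷ_j = max_i X i j is δ̄-critical with deltaBar ≥ 0 -/
lemma topPoint (hn : 0 < n) (hX : ∀ i j, X i j ∈ Set.Ico (0:ℝ) 1) :
    ∃ yt ∈ criticalBarSet X, 0 ≤ deltaBar X yt := by
  have hne : ∀ j : Fin d, (Finset.univ.image (fun i => X i j)).Nonempty := fun j =>
    (Finset.univ_nonempty_iff.2 (Fin.pos_iff_nonempty.1 hn)).image _
  set yt := fun j => (Finset.univ.image (fun i => X i j)).max' (hne j) with hyt
  have hle : ∀ i j, X i j ≤ yt j := fun i j =>
    Finset.le_max' (Finset.univ.image (fun i => X i j)) (X i j)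
      (mem_image_of_mem _ (mem_univ i))
  have hmem : ∀ j, ∃ i, X i j = yt j := by
    intro j
    obtain ⟨i, -, hi⟩ := Finset.mem_image.1 ((Finset.univ.image (fun i => X i j)).max'_mem (hne j))
    exact ⟨i, hi⟩
  have hcube : ∀ j, yt j ∈ Set.Icc (0:ℝ) 1 := by
    intro j
    obtain ⟨i, hi⟩ := hmem j
    rw [← hi]
    exact ⟨(hX i j).1, le_of_lt (hX i j).2⟩
  refine ⟨yt, ⟨hcube, ?_⟩, ?_⟩
  · intro j
    obtain ⟨i, hi⟩ := hmem j
    exact ⟨i, hi, fun l _ => hle i l⟩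
  · have hcc : countClosed X yt = n := by
      unfold countClosed
      rw [Finset.filter_true_of_mem (fun i _ => fun j => hle i j)]
      simp
    unfold deltaBar
    rw [hcc]
    have h1 : starVol yt ≤ 1 := starVol_le_one (fun j => (hcube j).1) (fun j => (hcube j).2)
    have h2 : (n:ℝ)/n = 1 := div_self (Nat.cast_ne_zero.2 hn.ne')
    rw [h2]
    linarith

lemma stepB (hn : 0 < n) (hX : ∀ i j, X i j ∈ Set.Ico (0:ℝ) 1) (y : Fin d → ℝ)
    (hy : ∀ j, y j ∈ Set.Icc (0:ℝ) 1) (hc : ¬ deltaBarCriticalPt X y) :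
    (∃ y' ∈ criticalBarSet X, deltaBar X y ≤ deltaBar X y') ∨
    (∃ y', (∀ j, y' j ∈ Set.Icc (0:ℝ) 1) ∧ measB X y' < measB X y ∧
      deltaBar X y ≤ deltaBar X y') := by
  rw [deltaBarCriticalPt] at hc
  push_neg at hc
  obtain ⟨j, hj⟩ := hc
  set S := Finset.univ.filter (fun i => X i j < y j ∧ ∀ l, l ≠ j → X i l ≤ y l) with hS
  by_cases hSne : S.Nonempty
  · right
    set T := S.image (fun i => X i j) with hT
    have hTne : T.Nonempty := hSne.image _
    set γ' := T.max' hTne with hγ'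
    obtain ⟨i0, hi0S, hi0⟩ := Finset.mem_image.1 (T.max'_mem hTne)
    rw [hS, mem_filter] at hi0S
    rw [← hγ'] at hi0
    have hγ'lt : γ' < y j := by rw [← hi0]; exact hi0S.2.1
    have hγ'0 : 0 ≤ γ' := by rw [← hi0]; exact (hX i0 j).1
    have hγ'G : γ' ∈ gammaBar X j := by rw [← hi0]; exact X_mem_gammaBar X i0 j
    set y' := Function.update y j γ' with hy'
    have hle : ∀ l, y' l ≤ y l := by
      intro l
      by_cases h : l = j
      · subst h; rw [hy', Function.update_self]; exact le_of_lt hγ'lt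
      · rw [hy', Function.update_of_ne h]
    have hy'j : y' j = γ' := by rw [hy', Function.update_self]
    have hy'0 : ∀ l, 0 ≤ y' l := by
      intro l
      by_cases h : l = j
      · subst h; rw [hy'j]; exact hγ'0
      · rw [hy', Function.update_of_ne h]; exact (hy l).1
    refine ⟨y', fun l => ⟨hy'0 l, le_trans (hle l) (hy l).2⟩, ?_, ?_⟩
    · unfold measB
      refine Finset.sum_lt_sum (fun l _ => ?_) ⟨j, mem_univ j, ?_⟩
      · apply Finset.card_le_card
        intro γ hγ
        rw [mem_filter] at hγ ⊢
        exact ⟨hγ.1, lt_of_lt_of_le hγ.2 (hle l)⟩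
      · apply Finset.card_lt_card
        rw [Finset.ssubset_iff_of_subset]
        · refine ⟨γ', by rw [mem_filter]; exact ⟨hγ'G, hγ'lt⟩, by simp [hy'j]⟩
        · intro γ hγ
          rw [mem_filter] at hγ ⊢
          rw [hy'j] at hγ
          exact ⟨hγ.1, lt_trans hγ.2 hγ'lt⟩
    · have hcount : countClosed X y' = countClosed X y := by
        apply countClosed_congr
        intro i
        constructor
        · intro h l
          exact le_trans (h l) (hle l)
        · intro h l
          by_cases hl : l = j
          · subst hl
            rw [hy'j]
            rcases eq_or_lt_of_le (h l) with heq | hlt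
            · obtain ⟨l', -, hlt'⟩ := hj i heq
              linarith [h l']
            · apply Finset.le_max'
              rw [hT]
              apply mem_image_of_mem
              rw [hS, mem_filter]
              exact ⟨mem_univ i, hlt, fun l' _ => h l'⟩
          · rw [hy', Function.update_of_ne hl]; exact h l
      unfold deltaBar
      rw [hcount]
      have : starVol y' ≤ starVol y := starVol_mono hy'0 hle
      linarith
  · left
    have hcc : countClosed X y = 0 := by
      unfold countClosed
      rw [Finset.card_eq_zero, Finset.filter_eq_empty_iff]
      intro i _ h
      rcases eq_or_lt_of_le (h j) with heq | hlt
      · obtain ⟨l', -, hlt'⟩ := hj i heq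
        linarith [h l']
      · exact hSne ⟨i, by rw [hS, mem_filter]; exact ⟨mem_univ i, hlt, fun l _ => h l⟩⟩
    obtain ⟨yt, hytc, hyt⟩ := topPoint hn hX
    refine ⟨yt, hytc, ?_⟩
    have : 0 ≤ starVol y := starVol_nonneg (fun l => (hy l).1)
    unfold deltaBar
    rw [hcc]
    simp only [Nat.cast_zero, zero_div]
    have := hyt
    unfold deltaBar at this
    linarith

lemma descentB (hn : 0 < n) (hX : ∀ i j, X i j ∈ Set.Ico (0:ℝ) 1) :
    ∀ N (y : Fin d → ℝ), measB X y ≤ N → (∀ j, y j ∈ Set.Icc (0:ℝ) 1) →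
    ∃ y' ∈ criticalBarSet X, deltaBar X y ≤ deltaBar X y' := by
  intro N
  induction N with
  | zero =>
    intro y hm hy
    by_cases hc : deltaBarCriticalPt X y
    · exact ⟨y, ⟨hy, hc⟩, le_refl _⟩
    · rcases stepB hn hX y hy hc with h | ⟨y', _, hlt, _⟩
      · exact h
      · omega
  | succ N ih =>
    intro y hm hy
    by_cases hc : deltaBarCriticalPt X y
    · exact ⟨y, ⟨hy, hc⟩, le_refl _⟩
    · rcases stepB hn hX y hy hc with h | ⟨y', hy1, hlt, hdel⟩
      · exact h
      · obtain ⟨y'', hy''c, hd2⟩ := ih y' (by omega) hy1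
        exact ⟨y'', hy''c, le_trans hdel hd2⟩

lemma maxB (hn : 0 < n) (hX : ∀ i j, X i j ∈ Set.Ico (0:ℝ) 1) (z : Fin d → ℝ)
    (hz : ∀ j, z j ∈ Set.Icc (0:ℝ) 1) :
    ∃ y' ∈ criticalBarSet X, deltaBar X z ≤ deltaBar X y' :=
  descentB hn hX (measB X z) z (le_refl _) hz

end DescB

section Final

variable {n d : ℕ} {X : Fin n → Fin d → ℝ}

lemma crit_grid (y : Fin d → ℝ) (h : deltaCriticalPt X y) :
    ∀ j, y j ∈ gammaBar X j := by
  intro j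
  rcases h j with ⟨i, hi, -⟩ | h1
  · rw [← hi]; exact X_mem_gammaBar X i j
  · rw [h1]; exact one_mem_gammaBar X j

lemma critBar_grid (y : Fin d → ℝ) (h : deltaBarCriticalPt X y) :
    ∀ j, y j ∈ gammaBar X j := by
  intro j
  obtain ⟨i, hi, -⟩ := h j
  rw [← hi]; exact X_mem_gammaBar X i j

end Final


/-- Δ(X), Δ̄(X) and Δ*(X) = Δ(X) ∪ Δ̄(X) are non-empty subsets of the grid Γ̄(X), and the
suprema of δ, δ̄ and δ* over the unit cube are attained as maxima over Δ(X), Δ̄(X) and Δ*(X),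
respectively. -/
theorem stmt1 (n d : ℕ) (hn : 0 < n) (hd : 0 < d)
    (X : Fin n → Fin d → ℝ) (hX : ∀ i j, X i j ∈ Set.Ico (0 : ℝ) 1) :
    (criticalSet X).Nonempty ∧ (criticalBarSet X).Nonempty ∧
    (criticalSet X ∪ criticalBarSet X).Nonempty ∧
    (criticalSet X ⊆ {y | ∀ j, y j ∈ gammaBar X j}) ∧
    (criticalBarSet X ⊆ {y | ∀ j, y j ∈ gammaBar X j}) ∧
    (criticalSet X ∪ criticalBarSet X ⊆ {y | ∀ j, y j ∈ gammaBar X j}) ∧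
    (∃ y ∈ criticalSet X, ∀ z, (∀ j, z j ∈ Set.Icc (0 : ℝ) 1) → delta X z ≤ delta X y) ∧
    (∃ y ∈ criticalBarSet X, ∀ z, (∀ j, z j ∈ Set.Icc (0 : ℝ) 1) →
      deltaBar X z ≤ deltaBar X y) ∧
    (∃ y ∈ criticalSet X ∪ criticalBarSet X, ∀ z, (∀ j, z j ∈ Set.Icc (0 : ℝ) 1) →
      max (delta X z) (deltaBar X z) ≤ max (delta X y) (deltaBar X y)) := by
  classical
  have hone : (fun _ : Fin d => (1:ℝ)) ∈ criticalSet X :=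
    ⟨fun j => ⟨zero_le_one, le_refl 1⟩, fun j => Or.inr rfl⟩
  obtain ⟨yt, hytc, -⟩ := topPoint hn hX
  have hsub1 : criticalSet X ⊆ {y | ∀ j, y j ∈ gammaBar X j} :=
    fun y hy => crit_grid y hy.2
  have hsub2 : criticalBarSet X ⊆ {y | ∀ j, y j ∈ gammaBar X j} :=
    fun y hy => critBar_grid y hy.2
  -- maximizer for delta
  set G : Finset (Fin d → ℝ) := Fintype.piFinset (fun j => gammaBar X j) with hG
  have hmemG : ∀ y : Fin d → ℝ, (∀ j, y j ∈ gammaBar X j) → y ∈ G := by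
    intro y hy
    rw [hG, Fintype.mem_piFinset]
    exact hy
  have hexA : ∃ y ∈ criticalSet X, ∀ z, (∀ j, z j ∈ Set.Icc (0:ℝ) 1) →
      delta X z ≤ delta X y := by
    set G1 := G.filter (fun y => y ∈ criticalSet X) with hG1
    have hG1ne : G1.Nonempty :=
      ⟨fun _ => 1, by rw [hG1, mem_filter]; exact ⟨hmemG _ (fun j => hsub1 hone j), hone⟩⟩
    obtain ⟨y, hyG1, hmax⟩ := G1.exists_max_image (delta X) hG1ne
    rw [hG1, mem_filter] at hyG1
    refine ⟨y, hyG1.2, ?_⟩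
    intro z hz
    obtain ⟨y', hy'c, hd⟩ := maxA hX z hz
    refine le_trans hd (hmax y' ?_)
    rw [hG1, mem_filter]
    exact ⟨hmemG _ (fun j => hsub1 hy'c j), hy'c⟩
  have hexB : ∃ y ∈ criticalBarSet X, ∀ z, (∀ j, z j ∈ Set.Icc (0:ℝ) 1) →
      deltaBar X z ≤ deltaBar X y := by
    set G2 := G.filter (fun y => y ∈ criticalBarSet X) with hG2
    have hG2ne : G2.Nonempty :=
      ⟨yt, by rw [hG2, mem_filter]; exact ⟨hmemG _ (fun j => hsub2 hytc j), hytc⟩⟩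
    obtain ⟨y, hyG2, hmax⟩ := G2.exists_max_image (deltaBar X) hG2ne
    rw [hG2, mem_filter] at hyG2
    refine ⟨y, hyG2.2, ?_⟩
    intro z hz
    obtain ⟨y', hy'c, hd⟩ := maxB hn hX z hz
    refine le_trans hd (hmax y' ?_)
    rw [hG2, mem_filter]
    exact ⟨hmemG _ (fun j => hsub2 hy'c j), hy'c⟩
  obtain ⟨y1, hy1c, hy1⟩ := id hexA
  obtain ⟨y2, hy2c, hy2⟩ := id hexB
  refine ⟨⟨_, hone⟩, ⟨yt, hytc⟩, ⟨_, Or.inl hone⟩, hsub1, hsub2, ?_, hexA, hexB, ?_⟩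
  · intro y hy
    rcases hy with h | h
    · exact hsub1 h
    · exact hsub2 h
  · by_cases hcmp : deltaBar X y2 ≤ delta X y1
    · refine ⟨y1, Or.inl hy1c, ?_⟩
      intro z hz
      exact max_le (le_max_of_le_left (hy1 z hz))
        (le_max_of_le_left (le_trans (le_trans (hy2 z hz) hcmp) (le_refl _)))
    · push_neg at hcmp
      refine ⟨y2, Or.inr hy2c, ?_⟩
      intro z hz
      exact max_le (le_max_of_le_right (le_trans (hy1 z hz) (le_of_lt hcmp)))
        (le_max_of_le_right (hy2 z hz))
end

section
/- Let X = (x^1,…,x^n) be a sequence in [0,1)^d and let y ∈ [0,1]^d be such that some point x^i of X lies in the closed box [0,y]. Define z ∈ [0,1]^d (the point obtained by 'snapping down') by z_j = max{ x^i_j : i ∈ {1,…,n}, x^i ∈ [0,y] } for each j ∈ {1,…,d}. Then z ≤ y coordinatewise, the closed box [0,z] contains exactly the same points of X as [0,y] (i.e. Ā(z,X) = Ā(y,X)), z is a δ̄(X)-critical point, and consequently δ̄(z) ≥ δ̄(y). -/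
open Finset

/-- Snapping down: if some point of `X` lies in `[0,y]` and
`z_j = max {x^i_j : x^i ∈ [0,y]}` for every `j`, then `z ≤ y`, the closed box `[0,z]`
contains exactly the same points of `X` as `[0,y]` (in particular `Ā(z,X) = Ā(y,X)`),
`z` is δ̄(X)-critical, and `δ̄(z) ≥ δ̄(y)`. -/
theorem stmt4 (n d : ℕ) (hn : 0 < n) (hd : 0 < d)
    (X : Fin n → Fin d → ℝ) (hX : ∀ i j, X i j ∈ Set.Ico (0 : ℝ) 1)
    (y : Fin d → ℝ) (hy : ∀ j, y j ∈ Set.Icc (0 : ℝ) 1)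
    (hne : ∃ i : Fin n, ∀ j, X i j ≤ y j)
    (z : Fin d → ℝ)
    (hz : ∀ j, IsGreatest {v : ℝ | ∃ i : Fin n, (∀ l, X i l ≤ y l) ∧ v = X i j} (z j)) :
    (∀ j, z j ≤ y j) ∧
    (∀ i : Fin n, (∀ j, X i j ≤ z j) ↔ (∀ j, X i j ≤ y j)) ∧
    countClosed X z = countClosed X y ∧
    deltaBarCriticalPt X z ∧
    deltaBar X y ≤ deltaBar X z := by
  have hzy : ∀ j, z j ≤ y j := by
    intro j
    obtain ⟨i, hi, hv⟩ := (hz j).1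
    exact hv ▸ hi j
  have hiff : ∀ i : Fin n, (∀ j, X i j ≤ z j) ↔ (∀ j, X i j ≤ y j) := by
    intro i
    constructor
    · intro h j; exact (h j).trans (hzy j)
    · intro h j; exact (hz j).2 ⟨i, h, rfl⟩
  have hcount : countClosed X z = countClosed X y := by
    unfold countClosed
    congr 1
    apply Finset.filter_congr
    intro i _
    simp [hiff i]
  refine ⟨hzy, hiff, hcount, ?_, ?_⟩
  · intro j
    obtain ⟨i, hi, hv⟩ := (hz j).1
    exact ⟨i, hv.symm, fun l _ => (hz l).2 ⟨i, hi, rfl⟩⟩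
  · unfold deltaBar
    rw [hcount]
    have hprod : starVol z ≤ starVol y := by
      apply Finset.prod_le_prod
      · intro j _
        obtain ⟨i, _, hv⟩ := (hz j).1
        exact hv ▸ (hX i j).1
      · intro j _; exact hzy j
    linarith
end

section
/- In dimension d = 1, let 0 ≤ x^1 < x^2 < ⋯ < x^n < 1 and set x^0 := x^n − 1. Then the expectation of δ under the weights w_l dominates the expectation under uniform weights: ∑_{i=1}^n (x^i − x^{i−1}) δ(x^i) ≥ (1/n) ∑_{i=1}^n δ(x^i). -/
open Finset

/-- One-dimensional local discrepancy δ(y) = y - A(y,X)/n with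
`A(y,X) = #{i ∈ {1,…,n} : x^i < y}`. -/
noncomputable def delta1 (n : ℕ) (x : ℕ → ℝ) (y : ℝ) : ℝ :=
  y - (((Finset.Icc 1 n).filter fun i => x i < y).card : ℝ) / n

/-- In dimension 1, if `0 ≤ x^1 < x^2 < ⋯ < x^n < 1` and `x^0 := x^n - 1`, then the
expectation of δ under the weights `w_l(x^i) = x^i - x^{i-1}` dominates the expectation
under uniform weights. -/
theorem stmt7 (n : ℕ) (hn : 0 < n) (x : ℕ → ℝ)
    (hmono : ∀ i j, 1 ≤ i → i < j → j ≤ n → x i < x j)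
    (h1 : 0 ≤ x 1) (hxn : x n < 1) (hx0 : x 0 = x n - 1) :
    (1 / n) * ∑ i ∈ Finset.Icc 1 n, delta1 n x (x i) ≤
      ∑ i ∈ Finset.Icc 1 n, (x i - x (i - 1)) * delta1 n x (x i) := by
  have hnR : (0:ℝ) < n := by exact_mod_cast hn
  set f : ℕ → ℝ := fun i => x i - ((i:ℝ) - 1) / n with hf
  set σ : ℕ → ℕ := fun i => if i = 1 then n else i - 1 with hσ
  -- delta1 at the points equals f
  have hdelta : ∀ i ∈ Finset.Icc 1 n, delta1 n x (x i) = f i := by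
    intro i hi
    simp only [mem_Icc] at hi
    have hcard : ((Finset.Icc 1 n).filter fun j => x j < x i) = Finset.Icc 1 (i-1) := by
      ext j
      simp only [mem_filter, mem_Icc]
      constructor
      · rintro ⟨⟨hj1, hjn⟩, hlt⟩
        refine ⟨hj1, ?_⟩
        by_contra h
        push_neg at h
        have hij : i ≤ j := by omega
        rcases eq_or_lt_of_le hij with h' | h'
        · rw [h'] at hlt; linarith
        · exact absurd (hmono i j hi.1 h' hjn) (by linarith)
      · rintro ⟨hj1, hji⟩
        have hji' : j < i := by omega
        exact ⟨⟨hj1, by omega⟩, hmono j i hj1 hji' hi.2⟩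
    rw [delta1, hcard, Nat.card_Icc]
    have h2 : i - 1 + 1 - 1 = i - 1 := by omega
    rw [h2]
    have h3 : ((i - 1 : ℕ) : ℝ) = (i:ℝ) - 1 := by
      rw [Nat.cast_sub hi.1, Nat.cast_one]
    rw [h3]
  -- reindexing lemma
  have hre : ∀ g : ℕ → ℝ,
      ∑ i ∈ Finset.Icc 1 n, g (σ i) = ∑ i ∈ Finset.Icc 1 n, g i := by
    intro g
    apply Finset.sum_nbij' (i := σ) (j := fun i => if i = n then 1 else i + 1)
    · intro a ha; simp only [mem_Icc] at ha ⊢; simp only [hσ]; split <;> omega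
    · intro a ha; simp only [mem_Icc] at ha ⊢; split <;> omega
    · intro a ha; simp only [mem_Icc] at ha; simp only [hσ]
      rcases eq_or_ne a 1 with h | h
      · simp [h]
      · simp [h]; split <;> omega
    · intro a ha; simp only [mem_Icc] at ha; simp only [hσ]
      rcases eq_or_ne a n with h | h
      · simp [h]
      · simp [h]; omega
    · intro a _; rfl
  -- weight identity
  have hw : ∀ i ∈ Finset.Icc 1 n, x i - x (i - 1) = f i - f (σ i) + 1/n := by
    intro i hi
    simp only [mem_Icc] at hi
    rcases eq_or_ne i 1 with h | h
    · subst h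
      simp only [hσ, if_pos rfl, hf]
      rw [hx0]
      have hc : ((n:ℝ) - 1) / n = 1 - 1/n := by field_simp
      push_cast
      rw [hc]; ring
    · have h1i : 2 ≤ i := by omega
      simp only [hσ, if_neg h, hf]
      have h3 : ((i - 1 : ℕ) : ℝ) = (i:ℝ) - 1 := by
        rw [Nat.cast_sub hi.1, Nat.cast_one]
      rw [h3]
      field_simp
      ring
  -- key nonnegativity
  have hsq : ∑ i ∈ Finset.Icc 1 n, (f (σ i))^2 = ∑ i ∈ Finset.Icc 1 n, (f i)^2 :=
    hre (fun j => (f j)^2)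
  have hkey : 0 ≤ ∑ i ∈ Finset.Icc 1 n, (f i - f (σ i)) * f i := by
    have hQ : (0:ℝ) ≤ ∑ i ∈ Finset.Icc 1 n, (f i - f (σ i))^2 :=
      Finset.sum_nonneg fun i _ => sq_nonneg _
    have hexp : ∑ i ∈ Finset.Icc 1 n, (f i - f (σ i))^2
        = ∑ i ∈ Finset.Icc 1 n, (2 * ((f i - f (σ i)) * f i) - (f i)^2 + (f (σ i))^2) :=
      Finset.sum_congr rfl fun i _ => by ring
    rw [hexp] at hQ
    rw [Finset.sum_add_distrib, Finset.sum_sub_distrib, ← Finset.mul_sum, hsq] at hQ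
    linarith
  -- assemble
  have hL : ∑ i ∈ Finset.Icc 1 n, delta1 n x (x i) = ∑ i ∈ Finset.Icc 1 n, f i :=
    Finset.sum_congr rfl hdelta
  have hR : ∑ i ∈ Finset.Icc 1 n, (x i - x (i - 1)) * delta1 n x (x i)
      = ∑ i ∈ Finset.Icc 1 n, (f i - f (σ i) + 1/n) * f i :=
    Finset.sum_congr rfl (fun i hi => by rw [hdelta i hi, hw i hi])
  rw [hL, hR]
  have hsplit : ∑ i ∈ Finset.Icc 1 n, (f i - f (σ i) + 1/n) * f i
      = (∑ i ∈ Finset.Icc 1 n, (f i - f (σ i)) * f i)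
        + (1/n) * ∑ i ∈ Finset.Icc 1 n, f i := by
    rw [Finset.mul_sum, ← Finset.sum_add_distrib]
    exact Finset.sum_congr rfl fun i _ => by ring
  rw [hsplit]
  linarith
end

section
/- In dimension d = 1, let 0 ≤ x^1 < x^2 < ⋯ < x^n < 1 and set x^{n+1} := x^1 + 1. Then the expectation of δ̄ under the weights w_u dominates the expectation under uniform weights: ∑_{i=1}^n (x^{i+1} − x^i) δ̄(x^i) ≥ (1/n) ∑_{i=1}^n δ̄(x^i). -/
open Finset

/-- One-dimensional local discrepancy δ̄(y) = Ā(y,X)/n - y with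
`Ā(y,X) = #{i ∈ {1,…,n} : x^i ≤ y}`. -/
noncomputable def deltaBar1 (n : ℕ) (x : ℕ → ℝ) (y : ℝ) : ℝ :=
  (((Finset.Icc 1 n).filter fun i => x i ≤ y).card : ℝ) / n - y

lemma deltaBar1_eq (n : ℕ) (x : ℕ → ℝ)
    (hmono : ∀ i j, 1 ≤ i → i < j → j ≤ n → x i < x j)
    {i : ℕ} (hi1 : 1 ≤ i) (hin : i ≤ n) :
    deltaBar1 n x (x i) = (i : ℝ) / n - x i := by
  have hf : (Finset.Icc 1 n).filter (fun j => x j ≤ x i) = Finset.Icc 1 i := by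
    ext j
    simp only [Finset.mem_filter, Finset.mem_Icc]
    constructor
    · rintro ⟨⟨hj1, hjn⟩, hle⟩
      refine ⟨hj1, ?_⟩
      by_contra h
      push_neg at h
      exact absurd hle (not_le.mpr (hmono i j hi1 h hjn))
    · rintro ⟨hj1, hji⟩
      refine ⟨⟨hj1, hji.trans hin⟩, ?_⟩
      rcases lt_or_eq_of_le hji with h | h
      · exact (hmono j i hj1 h hin).le
      · simp [h]
  rw [deltaBar1, hf, Nat.card_Icc]
  simp

/-- In dimension 1, if `0 ≤ x^1 < x^2 < ⋯ < x^n < 1` and `x^{n+1} := x^1 + 1`, then the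
expectation of δ̄ under the weights `w_u(x^i) = x^{i+1} - x^i` dominates the expectation
under uniform weights. -/
theorem stmt8 (n : ℕ) (hn : 0 < n) (x : ℕ → ℝ)
    (hmono : ∀ i j, 1 ≤ i → i < j → j ≤ n → x i < x j)
    (h1 : 0 ≤ x 1) (hxn : x n < 1) (hxn1 : x (n + 1) = x 1 + 1) :
    (1 / n) * ∑ i ∈ Finset.Icc 1 n, deltaBar1 n x (x i) ≤
      ∑ i ∈ Finset.Icc 1 n, (x (i + 1) - x i) * deltaBar1 n x (x i) := by
  set d : ℕ → ℝ := fun i => (i : ℝ) / n - x i with hd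
  have hdb : ∀ i ∈ Finset.Icc 1 n, deltaBar1 n x (x i) = d i := by
    intro i hi
    rw [Finset.mem_Icc] at hi
    exact deltaBar1_eq n x hmono hi.1 hi.2
  have e1 : ∑ i ∈ Finset.Icc 1 n, deltaBar1 n x (x i) = ∑ i ∈ Finset.Icc 1 n, d i :=
    Finset.sum_congr rfl hdb
  have e2 : ∑ i ∈ Finset.Icc 1 n, (x (i + 1) - x i) * deltaBar1 n x (x i)
      = ∑ i ∈ Finset.Icc 1 n, (x (i + 1) - x i) * d i :=
    Finset.sum_congr rfl (fun i hi => by rw [hdb i hi])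
  rw [e1, e2]
  -- reduce to 0 ≤ ∑ (d i - d (i+1)) * d i
  have key : ∑ i ∈ Finset.Icc 1 n, (x (i + 1) - x i) * d i
      - (1 / n) * ∑ i ∈ Finset.Icc 1 n, d i
      = ∑ i ∈ Finset.Icc 1 n, (d i - d (i + 1)) * d i := by
    rw [Finset.mul_sum, ← Finset.sum_sub_distrib]
    refine Finset.sum_congr rfl fun i hi => ?_
    have : d i - d (i + 1) = x (i + 1) - x i - 1 / n := by
      simp only [hd]
      push_cast
      field_simp
      ring
    rw [this]; ring
  have hdn1 : d (n + 1) = d 1 := by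
    have hn' : (n : ℝ) ≠ 0 := by positivity
    simp only [hd, hxn1]
    push_cast
    field_simp
    ring
  have tele_gen : ∀ m : ℕ, ∑ i ∈ Finset.Icc 1 m, (d i ^ 2 - d (i + 1) ^ 2)
      = d 1 ^ 2 - d (m + 1) ^ 2 := by
    intro m
    induction m with
    | zero => simp
    | succ k ih =>
      rw [Finset.sum_Icc_succ_top (Nat.le_add_left 1 k), ih]
      ring
  have tele : ∑ i ∈ Finset.Icc 1 n, (d i ^ 2 - d (i + 1) ^ 2)
      = d 1 ^ 2 - d (n + 1) ^ 2 := by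
    exact tele_gen n
  have hpos : 0 ≤ ∑ i ∈ Finset.Icc 1 n, (d i - d (i + 1)) * d i := by
    have expand : ∀ i : ℕ, (d i - d (i + 1)) * d i
        = (d i - d (i + 1)) ^ 2 / 2 + (d i ^ 2 - d (i + 1) ^ 2) / 2 := by
      intro i; ring
    rw [Finset.sum_congr rfl (fun i _ => expand i), Finset.sum_add_distrib]
    have h1' : 0 ≤ ∑ i ∈ Finset.Icc 1 n, (d i - d (i + 1)) ^ 2 / 2 :=
      Finset.sum_nonneg fun i _ => by positivity
    have h2' : ∑ i ∈ Finset.Icc 1 n, (d i ^ 2 - d (i + 1) ^ 2) / 2 = 0 := by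
      rw [← Finset.sum_div, tele, hdn1]
      ring
    linarith
  linarith [key, hpos]
end

section
/- Let ε ∈ (0,1), let n, d be positive integers, and let X = (x^1,…,x^n) be a sequence in [0,1)^d. Let x* ∈ [0,1]^d satisfy δ(x*) = sup_{x∈[0,1]^d} δ(x) and assume V_{x*} ≥ ε. Then the Lebesgue measure of the set { r ∈ [0,1]^d : δ(x*) − δ(r) ≤ ε } is at least (1/d!) · ε^d / V_{x*}^{d−1}, and in particular at least ε^d/d!. -/
open Finset MeasureTheory

/-!
Points `r ≤ x*` (coordinatewise) contain no more sample points in their anchored boxes than `x*`,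
so `δ(x*) - δ(r) ≤ V_{x*} - V_r`. With `c = ε / V_{x*}`, the points `r_j = x*_j (1 - c u_j)`, for
`u` in the corner simplex `{u ≥ 0, ∑ u_j ≤ 1}`, satisfy `V_r ≥ (1 - c) V_{x*}` by the Weierstrass
product inequality, hence `δ(x*) - δ(r) ≤ c V_{x*} = ε`. This affine image of the simplex has
volume `c^d V_{x*} / d! = ε^d / (d! V_{x*}^{d-1})`.
-/

theorem volume_image_mul {ι : Type*} [Fintype ι] (a : ι → ℝ) (s : Set (ι → ℝ)) :
    volume ((fun x => a * x) '' s) = ENNReal.ofReal |∏ i, a i| * volume s := by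
  classical
  have hlin : (fun x => a * x) = Matrix.toLin' (Matrix.diagonal a) := by
    ext x i; simp [Matrix.mulVec_diagonal]
  rw [hlin, Measure.addHaar_image_linearMap, LinearMap.det_toLin', Matrix.det_diagonal]

def cornerSimplex (ι : Type*) [Fintype ι] : Set (ι → ℝ) := {x | (∀ i, 0 ≤ x i) ∧ ∑ i, x i ≤ 1}

theorem volume_sum_abs_lt_one (ι : Type*) [Fintype ι] :
    volume {x : ι → ℝ | ∑ i, |x i| < 1} =
      ENNReal.ofReal (2 ^ Fintype.card ι / (Fintype.card ι).factorial) := by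
  simpa [one_add_one_eq_two, Real.Gamma_nat_eq_factorial] using
    volume_sum_rpow_lt_one ι (p := 1) le_rfl

/-- The `ℓ¹` unit ball is covered by the `2 ^ card ι` reflections of the simplex in the coordinate
hyperplanes. -/
theorem ofReal_inv_factorial_le_volume_cornerSimplex (ι : Type*) [Fintype ι] :
    ENNReal.ofReal (1 / (Fintype.card ι).factorial) ≤ volume (cornerSimplex ι) := by
  classical
  set reflect : (ι → Bool) → (ι → ℝ) := fun s i => if s i then -1 else 1
  have hcover : {x : ι → ℝ | ∑ i, |x i| < 1} ⊆
      ⋃ s, (fun x => reflect s * x) '' cornerSimplex ι := by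
    intro x hx
    refine Set.mem_iUnion.2 ⟨fun i => decide (x i < 0), fun i => |x i|,
      ⟨fun i => abs_nonneg _, hx.out.le⟩, ?_⟩
    ext i
    by_cases h : x i < 0 <;> simp [reflect, h, abs_of_neg, abs_of_nonneg, not_lt.1]
  have hball : ENNReal.ofReal (2 ^ Fintype.card ι / (Fintype.card ι).factorial) ≤
      2 ^ Fintype.card ι * volume (cornerSimplex ι) :=
    calc _ = volume {x : ι → ℝ | ∑ i, |x i| < 1} := (volume_sum_abs_lt_one ι).symm
      _ ≤ ∑ s, volume ((fun x => reflect s * x) '' cornerSimplex ι) :=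
          (measure_mono hcover).trans (measure_iUnion_fintype_le _ _)
      _ = 2 ^ Fintype.card ι * volume (cornerSimplex ι) := by
          simp_rw [volume_image_mul]
          simp [reflect, prod_ite]
  rw [div_eq_mul_one_div, ENNReal.ofReal_mul (by positivity), ENNReal.ofReal_pow zero_le_two,
    ENNReal.ofReal_ofNat] at hball
  exact (ENNReal.mul_le_mul_iff_right (by simp) (by simp)).1 hball

theorem ofReal_le_volume_image_mul_one_sub_smul {ι : Type*} [Fintype ι] {x : ι → ℝ}
    (hx : ∀ i, 0 ≤ x i) {c : ℝ} (hc : 0 ≤ c) :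
    ENNReal.ofReal (c ^ Fintype.card ι * (∏ i, x i) / (Fintype.card ι).factorial) ≤
      volume ((fun u => x * (1 - c • u)) '' cornerSimplex ι) := by
  have hmap : (fun u => x * (1 - c • u)) '' cornerSimplex ι =
      (x + ·) '' ((fun u => -(c • x) * u) '' cornerSimplex ι) := by
    rw [Set.image_image]; congr 1; ext u i; simp; ring
  have habs : |∏ i, (-(c • x)) i| = c ^ Fintype.card ι * ∏ i, x i := by
    simp [abs_prod, abs_of_nonneg hc, abs_of_nonneg (hx _), prod_mul_distrib]
  rw [hmap, Set.image_add_left, measure_preimage_add, volume_image_mul, habs, div_eq_mul_one_div,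
    ENNReal.ofReal_mul (mul_nonneg (pow_nonneg hc _) (prod_nonneg fun i _ => hx i))]
  exact mul_le_mul_right (ofReal_inv_factorial_le_volume_cornerSimplex ι) _

theorem one_sub_sum_le_prod_one_sub {ι : Type*} (s : Finset ι) {f : ι → ℝ}
    (h0 : ∀ i ∈ s, 0 ≤ f i) (h1 : ∀ i ∈ s, f i ≤ 1) : 1 - ∑ i ∈ s, f i ≤ ∏ i ∈ s, (1 - f i) := by
  classical
  induction s using Finset.induction_on with
  | empty => simp
  | insert a s ha ih =>
    rw [sum_insert ha, prod_insert ha]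
    have hs := ih (fun i hi => h0 i (mem_insert_of_mem hi)) (fun i hi => h1 i (mem_insert_of_mem hi))
    have hsum : 0 ≤ ∑ i ∈ s, f i := sum_nonneg fun i hi => h0 i (mem_insert_of_mem hi)
    nlinarith [mul_nonneg (sub_nonneg.2 (h1 a (mem_insert_self a s))) (sub_nonneg.2 hs),
      mul_nonneg (h0 a (mem_insert_self a s)) hsum]

section Simplex

variable {ι : Type*} [Fintype ι] {c : ℝ} {u : ι → ℝ}

theorem one_sub_smul_apply_mem_Icc (hc0 : 0 ≤ c) (hc1 : c ≤ 1) (hu : u ∈ cornerSimplex ι)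
    (j : ι) : (1 - c • u) j ∈ Set.Icc (0 : ℝ) 1 := by
  have huj : u j ≤ 1 := (single_le_sum (fun i _ => hu.1 i) (mem_univ j)).trans hu.2
  have : c * u j ≤ 1 := mul_le_one₀ hc1 (hu.1 j) huj
  simp only [Pi.sub_apply, Pi.one_apply, Pi.smul_apply, smul_eq_mul, Set.mem_Icc]
  constructor <;> nlinarith [hu.1 j]

theorem one_sub_le_prod_one_sub_smul (hc0 : 0 ≤ c) (hc1 : c ≤ 1) (hu : u ∈ cornerSimplex ι) :
    1 - c ≤ ∏ j, (1 - c • u) j := by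
  have hcu : c * ∑ j, u j ≤ c := mul_le_of_le_one_right hc0 hu.2
  calc 1 - c ≤ 1 - ∑ j, c * u j := by rw [← mul_sum]; linarith
    _ ≤ ∏ j, (1 - c * u j) := one_sub_sum_le_prod_one_sub _
          (fun j _ => mul_nonneg hc0 (hu.1 j))
          (fun j _ => by simpa using (one_sub_smul_apply_mem_Icc hc0 hc1 hu j).1)
    _ = ∏ j, (1 - c • u) j := rfl

end Simplex

theorem countOpen_mono {n d : ℕ} (X : Fin n → Fin d → ℝ) {r y : Fin d → ℝ} (h : r ≤ y) :
    countOpen X r ≤ countOpen X y :=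
  card_le_card fun i hi => by
    simp only [mem_filter] at hi ⊢
    exact ⟨hi.1, fun j => (hi.2 j).trans_le (h j)⟩

theorem delta_sub_delta_le_of_le {n d : ℕ} (X : Fin n → Fin d → ℝ) {r y : Fin d → ℝ}
    (h : r ≤ y) : delta X y - delta X r ≤ starVol y - starVol r := by
  have : (countOpen X r : ℝ) / n ≤ countOpen X y / n := by
    gcongr; exact_mod_cast countOpen_mono X h
  unfold delta; linarith

theorem starVol_mul {d : ℕ} (x y : Fin d → ℝ) : starVol (x * y) = starVol x * starVol y :=
  prod_mul_distrib

theorem image_mul_one_sub_smul_cornerSimplex_subset {n d : ℕ} (X : Fin n → Fin d → ℝ)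
    {x : Fin d → ℝ} (hx : ∀ j, x j ∈ Set.Icc (0 : ℝ) 1) {c : ℝ} (hc0 : 0 ≤ c) (hc1 : c ≤ 1) :
    (fun u => x * (1 - c • u)) '' cornerSimplex (Fin d) ⊆
      {r | (∀ j, r j ∈ Set.Icc (0 : ℝ) 1) ∧ delta X x - delta X r ≤ c * starVol x} := by
  rintro _ ⟨u, hu, rfl⟩
  have hv := one_sub_smul_apply_mem_Icc hc0 hc1 hu
  have hle : x * (1 - c • u) ≤ x := fun j => mul_le_of_le_one_right (hx j).1 (hv j).2
  refine ⟨fun j => ⟨mul_nonneg (hx j).1 (hv j).1, mul_le_one₀ (hx j).2 (hv j).1 (hv j).2⟩, ?_⟩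
  have hvol : (1 - c) * starVol x ≤ starVol (x * (1 - c • u)) := by
    rw [starVol_mul, mul_comm]
    exact mul_le_mul_of_nonneg_left (one_sub_le_prod_one_sub_smul hc0 hc1 hu)
      (prod_nonneg fun j _ => (hx j).1)
  linarith [delta_sub_delta_le_of_le X hle]

theorem stmt9_general (n d : ℕ) (hd : 0 < d) (ε : ℝ) (hε : ε ∈ Set.Ioo (0 : ℝ) 1)
    (X : Fin n → Fin d → ℝ)
    (xs : Fin d → ℝ) (hxs : ∀ j, xs j ∈ Set.Icc (0 : ℝ) 1)
    (hV : ε ≤ starVol xs) :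
    ENNReal.ofReal ((1 / (d.factorial : ℝ)) * ε ^ d / starVol xs ^ (d - 1)) ≤
      volume {r : Fin d → ℝ | (∀ j, r j ∈ Set.Icc (0 : ℝ) 1) ∧
        delta X xs - delta X r ≤ ε} ∧
    ENNReal.ofReal (ε ^ d / (d.factorial : ℝ)) ≤
      volume {r : Fin d → ℝ | (∀ j, r j ∈ Set.Icc (0 : ℝ) 1) ∧
        delta X xs - delta X r ≤ ε} := by
  set V := starVol xs
  have hV0 : 0 < V := hε.1.trans_le hV
  set c := ε / V
  have hcV : c * V = ε := div_mul_cancel₀ ε hV0.ne'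
  have hcd : c ^ d * V = ε ^ d / V ^ (d - 1) := by
    obtain ⟨m, rfl⟩ : ∃ m, d = m + 1 := ⟨d - 1, by omega⟩
    rw [Nat.add_sub_cancel, ← hcV]
    field_simp
    ring
  have hc0 : 0 ≤ c := div_nonneg hε.1.le hV0.le
  have hmain : ENNReal.ofReal ((1 / (d.factorial : ℝ)) * ε ^ d / V ^ (d - 1)) ≤
      volume {r : Fin d → ℝ | (∀ j, r j ∈ Set.Icc (0 : ℝ) 1) ∧ delta X xs - delta X r ≤ ε} :=
    calc _ = ENNReal.ofReal (c ^ d * V / d.factorial) := by rw [hcd]; ring_nf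
      _ ≤ volume ((fun u => xs * (1 - c • u)) '' cornerSimplex (Fin d)) := by
          have h := ofReal_le_volume_image_mul_one_sub_smul (fun j => (hxs j).1) hc0
          rwa [Fintype.card_fin] at h
      _ ≤ _ := by
          rw [← hcV]
          exact measure_mono (image_mul_one_sub_smul_cornerSimplex_subset X hxs hc0
            ((div_le_one hV0).2 hV))
  refine ⟨hmain, le_trans (ENNReal.ofReal_le_ofReal ?_) hmain⟩
  have hVd : V ^ (d - 1) ≤ 1 :=
    pow_le_one₀ hV0.le (prod_le_one (fun j _ => (hxs j).1) fun j _ => (hxs j).2)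
  rw [mul_div_assoc, one_div_mul_eq_div]
  gcongr
  exact le_div_self (pow_nonneg hε.1.le _) (pow_pos hV0 _) hVd

/-- If `x*` maximizes δ over `[0,1]^d` and `V_{x*} ≥ ε`, then the Lebesgue measure of
`{r ∈ [0,1]^d : δ(x*) - δ(r) ≤ ε}` is at least `(1/d!)·ε^d/V_{x*}^{d-1}`, and in
particular at least `ε^d/d!`. -/
theorem stmt9 (n d : ℕ) (hn : 0 < n) (hd : 0 < d) (ε : ℝ) (hε : ε ∈ Set.Ioo (0 : ℝ) 1)
    (X : Fin n → Fin d → ℝ) (hX : ∀ i j, X i j ∈ Set.Ico (0 : ℝ) 1)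
    (xs : Fin d → ℝ) (hxs : ∀ j, xs j ∈ Set.Icc (0 : ℝ) 1)
    (hmax : ∀ x : Fin d → ℝ, (∀ j, x j ∈ Set.Icc (0 : ℝ) 1) → delta X x ≤ delta X xs)
    (hV : ε ≤ starVol xs) :
    ENNReal.ofReal ((1 / (d.factorial : ℝ)) * ε ^ d / starVol xs ^ (d - 1)) ≤
      volume {r : Fin d → ℝ | (∀ j, r j ∈ Set.Icc (0 : ℝ) 1) ∧
        delta X xs - delta X r ≤ ε} ∧
    ENNReal.ofReal (ε ^ d / (d.factorial : ℝ)) ≤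
      volume {r : Fin d → ℝ | (∀ j, r j ∈ Set.Icc (0 : ℝ) 1) ∧
        delta X xs - delta X r ≤ ε} :=
  stmt9_general n d hd ε hε X xs hxs hV
end

section
/- Let ε ∈ (0,1), let n, d be positive integers, and let X = (x^1,…,x^n) be a sequence in [0,1)^d. Let x* ∈ [0,1]^d satisfy δ(x*) = sup_{x∈[0,1]^d} δ(x) and assume V_{x*} ≥ ε. Let ε' ∈ (0,1) and let R be a positive integer with R ≥ |ln(ε')| · |ln(1 − ε^d)|^{−1}. If r^1,…,r^R ∈ [0,1]^d are sampled independently with respect to π^d and δ^R := max_{i=1,…,R} δ(r^i), then δ(x*) − δ^R ≤ ε holds with probability at least 1 − ε'. -/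
open Finset MeasureTheory

/-- The density of the probability measure π^d on `[0,1]^d` (extended by `0` outside the
cube): `x ↦ ∏_j d·x_j^(d-1)` on `[0,1]^d`. -/
noncomputable def piDens (d : ℕ) (x : Fin d → ℝ) : ENNReal :=
  (Set.Icc (0 : Fin d → ℝ) 1).indicator
    (fun x => ENNReal.ofReal (∏ j, (d : ℝ) * x j ^ (d - 1))) x

lemma lintegral_pi_prod {E : Type*} [MeasurableSpace E] (μ : Measure E) [SigmaFinite μ] :
    ∀ (R : ℕ) (g : Fin R → E → ENNReal), (∀ i, Measurable (g i)) →
      ∫⁻ x : Fin R → E, ∏ i, g i (x i) ∂(Measure.pi fun _ => μ) = ∏ i, ∫⁻ t, g i t ∂μ := by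
  intro R
  induction R with
  | zero =>
      intro g hg
      simp [Measure.pi_univ]
  | succ R ih =>
      intro g hg
      have hmp := MeasureTheory.measurePreserving_piFinSuccAbove (fun _ : Fin (R+1) => μ) 0
      have hemb := (MeasurableEquiv.piFinSuccAbove (fun _ : Fin (R+1) => E) 0).measurableEmbedding
      have key := hmp.lintegral_comp_emb hemb
        (fun p : E × (Fin R → E) => g 0 p.1 * ∏ j : Fin R, g j.succ (p.2 j))
      have h1 : ∀ x : Fin (R+1) → E,
          (fun p : E × (Fin R → E) => g 0 p.1 * ∏ j : Fin R, g j.succ (p.2 j))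
            ((MeasurableEquiv.piFinSuccAbove (fun _ : Fin (R+1) => E) 0) x)
          = ∏ i, g i (x i) := by
        intro x
        rw [Fin.prod_univ_succ]
        simp [MeasurableEquiv.piFinSuccAbove, Fin.succAbove, Fin.tail]
      rw [show (∫⁻ x : Fin (R+1) → E, ∏ i, g i (x i) ∂(Measure.pi fun _ => μ))
            = ∫⁻ x : Fin (R+1) → E,
                (fun p : E × (Fin R → E) => g 0 p.1 * ∏ j : Fin R, g j.succ (p.2 j))
                  ((MeasurableEquiv.piFinSuccAbove (fun _ : Fin (R+1) => E) 0) x)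
                ∂(Measure.pi fun _ => μ) from by
        exact lintegral_congr fun x => (h1 x).symm]
      rw [key]
      have hgm : Measurable (fun y : Fin R → E => ∏ j : Fin R, g j.succ (y j)) :=
        Finset.measurable_prod _ fun j _ => (hg j.succ).comp (measurable_pi_apply j)
      rw [MeasureTheory.lintegral_prod_mul (hg 0).aemeasurable hgm.aemeasurable]
      rw [ih (fun j => g j.succ) (fun j => hg j.succ), Fin.prod_univ_succ]

lemma oneDim (d : ℕ) (hd : 0 < d) (a b : ℝ) (ha : 0 ≤ a) (hab : a ≤ b) :
    ∫⁻ t in Set.Icc a b, ENNReal.ofReal ((d : ℝ) * t ^ (d - 1)) =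
      ENNReal.ofReal (b ^ d - a ^ d) := by
  have hint : IntegrableOn (fun t : ℝ => (d : ℝ) * t ^ (d - 1)) (Set.Icc a b) :=
    (Continuous.integrableOn_Icc (by continuity))
  rw [← MeasureTheory.ofReal_integral_eq_lintegral_ofReal hint]
  · congr 1
    rw [MeasureTheory.integral_Icc_eq_integral_Ioc, ← intervalIntegral.integral_of_le hab]
    rw [intervalIntegral.integral_const_mul, integral_pow]
    rw [show ((d:ℕ) - 1 + 1 : ℕ) = d from Nat.sub_add_cancel hd]
    have hd' : ((d : ℕ) : ℝ) ≠ 0 := by positivity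
    rw [show ((d - 1 : ℕ) : ℝ) + 1 = (d : ℝ) by
      rw [← Nat.cast_add_one, Nat.sub_add_cancel hd]]
    field_simp
  · filter_upwards [ae_restrict_mem measurableSet_Icc] with t ht
    have : 0 ≤ t := le_trans ha ht.1
    positivity

lemma box_integral (d : ℕ) (hd : 0 < d) (aa bb : Fin d → ℝ) (ha : ∀ j, 0 ≤ aa j)
    (hab : ∀ j, aa j ≤ bb j) (hb1 : ∀ j, bb j ≤ 1) :
    ∫⁻ x in Set.Icc aa bb, piDens d x = ∏ j, ENNReal.ofReal (bb j ^ d - aa j ^ d) := by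
  have hIcc : MeasurableSet (Set.Icc aa bb) := measurableSet_Icc
  set g : Fin d → ℝ → ENNReal := fun j =>
    (Set.Icc (aa j) (bb j)).indicator (fun t => ENNReal.ofReal ((d : ℝ) * t ^ (d - 1))) with hg
  have hfact : ∀ x : Fin d → ℝ,
      (Set.Icc aa bb).indicator (piDens d) x = ∏ j, g j (x j) := by
    intro x
    by_cases h : x ∈ Set.Icc aa bb
    · rw [Set.indicator_of_mem h]
      have hx01 : x ∈ Set.Icc (0 : Fin d → ℝ) 1 :=
        ⟨fun j => le_trans (ha j) (h.1 j), fun j => le_trans (h.2 j) (hb1 j)⟩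
      rw [piDens, Set.indicator_of_mem hx01]
      rw [ENNReal.ofReal_prod_of_nonneg (fun j _ => by
        have : (0:ℝ) ≤ x j := le_trans (ha j) (h.1 j)
        positivity)]
      refine Finset.prod_congr rfl fun j _ => ?_
      exact (Set.indicator_of_mem (Set.mem_Icc.mpr ⟨h.1 j, h.2 j⟩)
        (fun t => ENNReal.ofReal ((d : ℝ) * t ^ (d - 1)))).symm
    · rw [Set.indicator_of_notMem h]
      have : ∃ j, x j ∉ Set.Icc (aa j) (bb j) := by
        by_contra hc
        push_neg at hc
        exact h ⟨fun j => (hc j).1, fun j => (hc j).2⟩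
      obtain ⟨j, hj⟩ := this
      exact (Finset.prod_eq_zero (Finset.mem_univ j)
        (by rw [hg]; exact Set.indicator_of_notMem hj _)).symm
  rw [← lintegral_indicator hIcc, MeasureTheory.volume_pi,
    lintegral_congr hfact,
    lintegral_pi_prod volume d g (fun j =>
      Measurable.indicator (by measurability) measurableSet_Icc)]
  exact Finset.prod_congr rfl fun j _ => by
    rw [hg]; rw [lintegral_indicator measurableSet_Icc]; exact oneDim d hd _ _ (ha j) (hab j)

lemma piDens_total (d : ℕ) (hd : 0 < d) : ∫⁻ x, piDens d x = 1 := by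
  have h1 : ∀ x, piDens d x = (Set.Icc (0 : Fin d → ℝ) 1).indicator (piDens d) x := by
    intro x
    by_cases h : x ∈ Set.Icc (0 : Fin d → ℝ) 1
    · rw [Set.indicator_of_mem h]
    · rw [Set.indicator_of_notMem h, piDens, Set.indicator_of_notMem h]
  rw [lintegral_congr h1, lintegral_indicator measurableSet_Icc,
    box_integral d hd 0 1 (fun _ => le_refl 0) (fun _ => zero_le_one) (fun _ => le_refl 1)]
  simp [zero_pow hd.ne']

lemma piDens_meas (d : ℕ) : Measurable (piDens d) :=
  Measurable.indicator (by measurability) measurableSet_Icc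

/-- If `x*` maximizes δ over `[0,1]^d`, `V_{x*} ≥ ε`, and `R ≥ |ln ε'|·|ln(1 - ε^d)|⁻¹`,
then for `R` points sampled independently with respect to `π^d` (i.e. the measure on
`([0,1]^d)^R` with density `∏_i π`-density of the `i`-th point w.r.t. Lebesgue measure),
the maximum `δ^R` of their δ-values satisfies `δ(x*) - δ^R ≤ ε` with probability at
least `1 - ε'`. -/
theorem stmt12 (n d : ℕ) (hn : 0 < n) (hd : 0 < d) (ε : ℝ) (hε : ε ∈ Set.Ioo (0 : ℝ) 1)
    (X : Fin n → Fin d → ℝ) (hX : ∀ i j, X i j ∈ Set.Ico (0 : ℝ) 1)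
    (xs : Fin d → ℝ) (hxs : ∀ j, xs j ∈ Set.Icc (0 : ℝ) 1)
    (hmax : ∀ x : Fin d → ℝ, (∀ j, x j ∈ Set.Icc (0 : ℝ) 1) → delta X x ≤ delta X xs)
    (hV : ε ≤ starVol xs)
    (ε' : ℝ) (hε' : ε' ∈ Set.Ioo (0 : ℝ) 1)
    (R : ℕ) (hRpos : 0 < R)
    (hR : |Real.log ε'| * |Real.log (1 - ε ^ d)|⁻¹ ≤ (R : ℝ)) :
    ENNReal.ofReal (1 - ε') ≤
      (volume.withDensity fun r : Fin R → Fin d → ℝ => ∏ i, piDens d (r i))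
        {r : Fin R → Fin d → ℝ |
          delta X xs -
            Finset.univ.sup' ⟨⟨0, hRpos⟩, Finset.mem_univ _⟩ (fun i => delta X (r i)) ≤ ε} := by
  obtain ⟨hε0, hε1⟩ := hε
  obtain ⟨hε'0, hε'1⟩ := hε'
  set V := starVol xs with hVdef
  have hV0 : 0 < V := lt_of_lt_of_le hε0 hV
  have hεV1 : ε / V ≤ 1 := (div_le_one hV0).mpr hV
  have h1εV : 0 ≤ 1 - ε / V := by linarith
  set c : ℝ := (1 - ε / V) ^ (1 / (d : ℝ)) with hcdef
  have hc0 : 0 ≤ c := Real.rpow_nonneg h1εV _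
  have hc1 : c ≤ 1 := Real.rpow_le_one h1εV (by
      have : 0 < ε / V := div_pos hε0 hV0
      linarith) (by positivity)
  have hdne : ((d : ℕ) : ℝ) ≠ 0 := by positivity
  have hcd : c ^ d = 1 - ε / V := by
    rw [hcdef, ← Real.rpow_natCast ((1 - ε / V) ^ (1 / (d : ℝ))) d, ← Real.rpow_mul h1εV]
    rw [one_div, inv_mul_cancel₀ hdne, Real.rpow_one]
  have hxs0 : ∀ j, 0 ≤ xs j := fun j => (hxs j).1
  have hxs1 : ∀ j, xs j ≤ 1 := fun j => (hxs j).2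
  set aa : Fin d → ℝ := fun j => c * xs j with haadef
  have haa0 : ∀ j, 0 ≤ aa j := fun j => mul_nonneg hc0 (hxs0 j)
  have haab : ∀ j, aa j ≤ xs j := fun j => by
    have := mul_le_of_le_one_left (hxs0 j) hc1
    simpa [haadef] using this
  set S : Set (Fin d → ℝ) := Set.Icc aa xs with hSdef
  have hmeasS : MeasurableSet S := measurableSet_Icc
  -- δ estimate on S
  have hδ : ∀ y ∈ S, delta X xs - delta X y ≤ ε := by
    intro y hy
    have hcount : (countOpen X y : ℝ) ≤ (countOpen X xs : ℝ) := by
      have : countOpen X y ≤ countOpen X xs := by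
        apply Finset.card_le_card
        intro i hi
        simp only [Finset.mem_filter, Finset.mem_univ, true_and] at hi ⊢
        exact fun j => lt_of_lt_of_le (hi j) (hy.2 j)
      exact_mod_cast this
    have hvol : V - ε ≤ starVol y := by
      have h1 : ∏ j, aa j ≤ ∏ j, y j :=
        Finset.prod_le_prod (fun j _ => haa0 j) (fun j _ => hy.1 j)
      have h2 : ∏ j, aa j = c ^ d * V := by
        rw [haadef]
        rw [Finset.prod_mul_distrib, Finset.prod_const, Finset.card_univ, Fintype.card_fin]
        rfl
      have h3 : c ^ d * V = V - ε := by
        rw [hcd]; field_simp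
      calc V - ε = ∏ j, aa j := by rw [h2, h3]
        _ ≤ ∏ j, y j := h1
        _ = starVol y := rfl
    have hdiv : (countOpen X y : ℝ) / n ≤ (countOpen X xs : ℝ) / n := by
      gcongr
    simp only [delta]
    have : (V : ℝ) = starVol xs := hVdef
    linarith [hvol, hdiv]
  -- measure computations
  have hSint : ∫⁻ x in S, piDens d x = ENNReal.ofReal (ε ^ d) := by
    rw [hSdef, box_integral d hd aa xs haa0 haab hxs1]
    rw [← ENNReal.ofReal_prod_of_nonneg (fun j _ => by
      have h1 : aa j ^ d ≤ xs j ^ d := pow_le_pow_left₀ (haa0 j) (haab j) d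
      linarith)]
    congr 1
    have heach : ∀ j, xs j ^ d - aa j ^ d = xs j ^ d * (ε / V) := by
      intro j
      rw [haadef]
      simp only
      rw [mul_pow, hcd]
      ring
    calc ∏ j, (xs j ^ d - aa j ^ d) = ∏ j, (xs j ^ d * (ε / V)) :=
          Finset.prod_congr rfl fun j _ => heach j
      _ = (∏ j, xs j ^ d) * (ε / V) ^ d := by
          rw [Finset.prod_mul_distrib, Finset.prod_const, Finset.card_univ, Fintype.card_fin]
      _ = (∏ j, xs j) ^ d * (ε / V) ^ d := by rw [Finset.prod_pow]
      _ = V ^ d * (ε / V) ^ d := rfl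
      _ = (V * (ε / V)) ^ d := (mul_pow _ _ _).symm
      _ = ε ^ d := by rw [mul_div_cancel₀ _ hV0.ne']
  have hScint : ∫⁻ x in Sᶜ, piDens d x = 1 - ENNReal.ofReal (ε ^ d) := by
    have hadd := lintegral_add_compl (piDens d) hmeasS (μ := volume)
    rw [piDens_total d hd, hSint] at hadd
    have hle : ENNReal.ofReal (ε ^ d) ≤ 1 := by
      rw [← ENNReal.ofReal_one]
      apply ENNReal.ofReal_le_ofReal
      exact le_of_lt (pow_lt_one₀ hε0.le hε1 hd.ne')
    rw [← hadd]
    rw [ENNReal.add_sub_cancel_left ENNReal.ofReal_ne_top]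
  set D : (Fin R → Fin d → ℝ) → ENNReal := fun r => ∏ i, piDens d (r i) with hDdef
  set Bad : Set (Fin R → Fin d → ℝ) := {r | ∀ i, r i ∉ S} with hBaddef
  have hBadMeas : MeasurableSet Bad := by
    have : Bad = ⋂ i, (fun r : Fin R → Fin d → ℝ => r i) ⁻¹' Sᶜ := by
      ext r; simp [hBaddef]
    rw [this]
    exact MeasurableSet.iInter fun i => (measurable_pi_apply i) hmeasS.compl
  have hμBad : (volume.withDensity D) Bad = (1 - ENNReal.ofReal (ε ^ d)) ^ R := by
    rw [withDensity_apply _ hBadMeas, ← lintegral_indicator hBadMeas]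
    have hptwise : ∀ r, Bad.indicator D r = ∏ i, (Sᶜ.indicator (piDens d)) (r i) := by
      intro r
      by_cases h : r ∈ Bad
      · rw [Set.indicator_of_mem h]
        exact Finset.prod_congr rfl fun i _ => (Set.indicator_of_mem (show r i ∈ Sᶜ from h i) (piDens d)).symm
      · rw [Set.indicator_of_notMem h]
        have : ∃ i, r i ∈ S := by
          by_contra hc; push_neg at hc; exact h hc
        obtain ⟨i, hi⟩ := this
        exact (Finset.prod_eq_zero (Finset.mem_univ i)
          (Set.indicator_of_notMem (show r i ∉ Sᶜ by simpa using hi) (piDens d))).symm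
    rw [lintegral_congr hptwise, MeasureTheory.volume_pi,
      lintegral_pi_prod volume R _ (fun i => (piDens_meas d).indicator hmeasS.compl)]
    simp [lintegral_indicator hmeasS.compl, hScint, Finset.prod_const, Finset.card_univ]
  have hμuniv : (volume.withDensity D) Set.univ = 1 := by
    rw [withDensity_apply _ MeasurableSet.univ, Measure.restrict_univ, hDdef,
      MeasureTheory.volume_pi, lintegral_pi_prod volume R _ (fun _ => piDens_meas d)]
    simp [piDens_total d hd]
  -- inclusion
  have hsub : Badᶜ ⊆ {r : Fin R → Fin d → ℝ |
      delta X xs -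
        Finset.univ.sup' ⟨⟨0, hRpos⟩, Finset.mem_univ _⟩ (fun i => delta X (r i)) ≤ ε} := by
    intro r hr
    have : ∃ i, r i ∈ S := by
      by_contra hc; push_neg at hc; exact hr hc
    obtain ⟨i, hi⟩ := this
    have h1 : delta X xs - delta X (r i) ≤ ε := hδ (r i) hi
    have h2 : delta X (r i) ≤
        Finset.univ.sup' ⟨⟨0, hRpos⟩, Finset.mem_univ _⟩ (fun i => delta X (r i)) :=
      Finset.le_sup' (fun i => delta X (r i)) (Finset.mem_univ i)
    simp only [Set.mem_setOf_eq]
    linarith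
  -- finish
  have hεd0 : (0:ℝ) < ε ^ d := pow_pos hε0 d
  have hεd1 : ε ^ d < 1 := pow_lt_one₀ hε0.le hε1 hd.ne'
  have hlogt : Real.log (1 - ε ^ d) < 0 := Real.log_neg (by linarith) (by linarith)
  have hlogε' : Real.log ε' < 0 := Real.log_neg hε'0 hε'1
  have hkey : (1 - ε ^ d) ^ R ≤ ε' := by
    have h1 : (-Real.log ε') / (-Real.log (1 - ε ^ d)) ≤ (R : ℝ) := by
      rw [div_eq_mul_inv]
      calc -Real.log ε' * (-Real.log (1 - ε ^ d))⁻¹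
          = |Real.log ε'| * |Real.log (1 - ε ^ d)|⁻¹ := by
            rw [abs_of_neg hlogε', abs_of_neg hlogt]
        _ ≤ (R : ℝ) := hR
    have h2 : -Real.log ε' ≤ (R : ℝ) * (-Real.log (1 - ε ^ d)) :=
      (div_le_iff₀ (by linarith)).mp h1
    have h3 : (R : ℝ) * Real.log (1 - ε ^ d) ≤ Real.log ε' := by nlinarith
    have h4 : Real.log ((1 - ε ^ d) ^ R) ≤ Real.log ε' := by
      rw [Real.log_pow]; exact_mod_cast h3
    have h5 : (0:ℝ) < (1 - ε ^ d) ^ R := pow_pos (by linarith) R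
    calc (1 - ε ^ d) ^ R = Real.exp (Real.log ((1 - ε ^ d) ^ R)) := (Real.exp_log h5).symm
      _ ≤ Real.exp (Real.log ε') := Real.exp_le_exp.mpr h4
      _ = ε' := Real.exp_log hε'0
  have hμcompl : (volume.withDensity D) Badᶜ = 1 - (1 - ENNReal.ofReal (ε ^ d)) ^ R := by
    rw [measure_compl hBadMeas (by rw [hμBad]; exact (lt_of_le_of_lt
      (pow_le_one' tsub_le_self R) ENNReal.one_lt_top).ne), hμuniv, hμBad]
  calc ENNReal.ofReal (1 - ε')
      = 1 - ENNReal.ofReal ε' := by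
        rw [ENNReal.ofReal_sub _ hε'0.le, ENNReal.ofReal_one]
    _ ≤ 1 - ENNReal.ofReal ((1 - ε ^ d) ^ R) :=
        tsub_le_tsub_left (ENNReal.ofReal_le_ofReal hkey) 1
    _ = 1 - (ENNReal.ofReal (1 - ε ^ d)) ^ R := by rw [ENNReal.ofReal_pow (by linarith)]
    _ = 1 - (1 - ENNReal.ofReal (ε ^ d)) ^ R := by
        rw [ENNReal.ofReal_sub _ hεd0.le, ENNReal.ofReal_one]
    _ = (volume.withDensity D) Badᶜ := hμcompl.symm
    _ ≤ _ := measure_mono hsub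
end

section
/- Let ε ∈ (0,1] and let z ∈ [0,1]^d with V_z ≥ ε. Then the Lebesgue measure of A_ε(z) is given exactly by λ^d(A_ε(z)) = V_z − (V_z − ε) · ∑_{k=0}^{d−1} (−ln(1 − ε/V_z))^k / k!. -/
/-!
Writing `x = z * u` coordinatewise, `A_ε(z)` is the image under the diagonal map `u ↦ z * u` of
`S_d(t) = {u ∈ [0,1]^d : t ≤ ∏ u_j}` with `t = 1 - ε / V_z`, so its volume is `V_z · λ^d(S_d(t))`.
Slicing along the first coordinate gives `λ^{d+1}(S_{d+1}(t)) = ∫_t^1 λ^d(S_d(t/x)) dx`, and with the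
antiderivative `x - t ∑_{k<d} (log x - log t)^{k+1}/(k+1)!` induction on `d` yields
`λ^d(S_d(t)) = 1 - t ∑_{k<d} (-log t)^k/k!`.
-/

open Finset MeasureTheory

/-- The set `A_ε(z) = {x ∈ [0,1]^d : x ≤ z, V_z - V_x ≤ ε}`. -/
def Aeps (d : ℕ) (ε : ℝ) (z : Fin d → ℝ) : Set (Fin d → ℝ) :=
  {x | (∀ j, x j ∈ Set.Icc (0 : ℝ) 1) ∧ (∀ j, x j ≤ z j) ∧ starVol z - starVol x ≤ ε}

open Real

def cubeProdGe (d : ℕ) (t : ℝ) : Set (Fin d → ℝ) :=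
  {u | (∀ j, u j ∈ Set.Icc (0 : ℝ) 1) ∧ t ≤ ∏ j, u j}

noncomputable def cubeProdGeVol (d : ℕ) (t : ℝ) : ℝ :=
  1 - t * ∑ k ∈ range d, (-log t) ^ k / (k.factorial : ℝ)

lemma cubeProdGeVol_nonneg (d : ℕ) {t : ℝ} (ht0 : 0 < t) (ht1 : t ≤ 1) :
    0 ≤ cubeProdGeVol d t := by
  have hsum : ∑ k ∈ range d, (-log t) ^ k / (k.factorial : ℝ) ≤ t⁻¹ :=
    calc _ ≤ exp (-log t) := sum_le_exp_of_nonneg (neg_nonneg.2 (log_nonpos ht0.le ht1)) d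
      _ = t⁻¹ := by rw [exp_neg, exp_log ht0]
  have := mul_le_mul_of_nonneg_left hsum ht0.le
  rw [mul_inv_cancel₀ ht0.ne'] at this
  unfold cubeProdGeVol
  linarith

lemma hasDerivAt_cubeProdGeVol_antideriv (d : ℕ) {t x : ℝ} (ht : 0 < t) (hx : 0 < x) :
    HasDerivAt
      (fun y => y - t * ∑ k ∈ range d, (log y - log t) ^ (k + 1) / ((k + 1).factorial : ℝ))
      (cubeProdGeVol d (t / x)) x := by
  have hlog : HasDerivAt (fun y => log y - log t) x⁻¹ x := (hasDerivAt_log hx.ne').sub_const _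
  have hsum := HasDerivAt.fun_sum fun k (_ : k ∈ range d) =>
    (hlog.fun_pow (k + 1)).div_const ((k + 1).factorial : ℝ)
  refine ((hasDerivAt_id' x).fun_sub (hsum.const_mul t)).congr_deriv ?_
  have hterm : ∀ k : ℕ, ((k + 1 : ℕ) : ℝ) * (log x - log t) ^ (k + 1 - 1) * x⁻¹
      / ((k + 1).factorial : ℝ) = x⁻¹ * ((-log (t / x)) ^ k / (k.factorial : ℝ)) := by
    intro k
    rw [log_div ht.ne' hx.ne', Nat.factorial_succ, Nat.add_sub_cancel]
    push_cast
    field_simp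
    ring
  simp only [hterm, ← mul_sum, cubeProdGeVol]
  ring

lemma continuousOn_cubeProdGeVol_div (d : ℕ) {t : ℝ} (ht : 0 < t) :
    ContinuousOn (fun x => cubeProdGeVol d (t / x)) (Set.Ioi 0) := by
  refine continuousOn_of_forall_continuousAt fun x (hx : 0 < x) => ?_
  unfold cubeProdGeVol
  fun_prop (disch := positivity)

lemma integral_cubeProdGeVol_div (d : ℕ) {t : ℝ} (ht0 : 0 < t) (ht1 : t ≤ 1) :
    ∫ x in t..1, cubeProdGeVol d (t / x) = cubeProdGeVol (d + 1) t := by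
  have hpos : ∀ x ∈ Set.uIcc t 1, 0 < x := fun x hx =>
    ht0.trans_le (by rw [Set.uIcc_of_le ht1] at hx; exact hx.1)
  rw [intervalIntegral.integral_eq_sub_of_hasDerivAt
    (fun x hx => hasDerivAt_cubeProdGeVol_antideriv d ht0 (hpos x hx))
    ((continuousOn_cubeProdGeVol_div d ht0).mono hpos).intervalIntegrable]
  simp only [cubeProdGeVol, sum_range_succ', log_one, zero_sub, sub_self, ne_eq,
    Nat.succ_ne_zero, not_false_eq_true, zero_pow, zero_div, sum_const_zero, mul_zero, sub_zero,
    pow_zero, Nat.factorial_zero, Nat.cast_one, div_one]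
  ring

lemma measurableSet_cube (d : ℕ) :
    MeasurableSet {u : Fin d → ℝ | ∀ j, u j ∈ Set.Icc (0 : ℝ) 1} := by
  simp_rw [Set.ofPred_forall]
  exact .iInter fun j => measurable_pi_apply j measurableSet_Icc

lemma prod_le_one_of_mem_cube {d : ℕ} {u : Fin d → ℝ} (hu : ∀ j, u j ∈ Set.Icc (0 : ℝ) 1) :
    ∏ j, u j ≤ 1 :=
  prod_le_one (fun j _ => (hu j).1) fun j _ => (hu j).2

lemma volume_cubeProdGe_succ (d : ℕ) {t : ℝ} (ht : 0 < t) :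
    volume (cubeProdGe (d + 1) t) = ∫⁻ x in Set.Icc t 1, volume (cubeProdGe d (t / x)) := by
  set T : Set (ℝ × (Fin d → ℝ)) :=
    {p | p.1 ∈ Set.Icc 0 1 ∧ (∀ j, p.2 j ∈ Set.Icc 0 1) ∧ t ≤ p.1 * ∏ j, p.2 j}
  have hT : MeasurableSet T :=
    (measurable_fst measurableSet_Icc).inter <| (measurable_snd (measurableSet_cube d)).inter <|
      measurableSet_le measurable_const <| measurable_fst.mul <|
        Finset.measurable_prod _ fun j _ => (measurable_pi_apply j).comp measurable_snd
  have hpre : cubeProdGe (d + 1) t = MeasurableEquiv.piFinSuccAbove (fun _ => ℝ) 0 ⁻¹' T := by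
    ext u
    simp only [cubeProdGe, T, Set.mem_ofPred_eq, Set.mem_preimage, Set.mem_Icc,
      MeasurableEquiv.piFinSuccAbove_apply, Fin.insertNthEquiv, Equiv.symm_mk, Equiv.coe_fn_mk,
      Fin.forall_fin_succ, Fin.prod_univ_succ, Fin.zero_succAbove, Fin.removeNth_zero]
    tauto
  have hslice (x : ℝ) : volume (Prod.mk x ⁻¹' T)
      = (Set.Icc t 1).indicator (fun x => volume (cubeProdGe d (t / x))) x := by
    by_cases hx : x ∈ Set.Icc t 1
    · have hx0 : 0 < x := ht.trans_le hx.1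
      rw [Set.indicator_of_mem hx]
      congr 1
      ext y
      simp only [T, cubeProdGe, Set.mem_preimage, Set.mem_ofPred_eq, div_le_iff₀ hx0, mul_comm x]
      exact ⟨fun h => h.2, fun h => ⟨⟨hx0.le, hx.2⟩, h⟩⟩
    · rw [Set.indicator_of_notMem hx, measure_eq_zero_iff_ae_notMem]
      refine .of_forall fun y ⟨hx01, hy, hle⟩ => hx ⟨?_, hx01.2⟩
      nlinarith [hx01.1, prod_le_one_of_mem_cube hy]
  calc volume (cubeProdGe (d + 1) t)
      = (volume.prod volume) T := by
        rw [hpre]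
        exact (volume_preserving_piFinSuccAbove (fun _ => ℝ) 0).measure_preimage
          hT.nullMeasurableSet
    _ = ∫⁻ x in Set.Icc t 1, volume (cubeProdGe d (t / x)) := by
        rw [Measure.prod_apply hT, lintegral_congr hslice, lintegral_indicator measurableSet_Icc]

lemma cubeProdGe_zero (d : ℕ) :
    cubeProdGe d 0 = Set.univ.pi fun _ => Set.Icc (0 : ℝ) 1 := by
  ext u
  simp only [cubeProdGe, Set.mem_ofPred_eq, Set.mem_pi, Set.mem_univ, true_imp_iff,
    and_iff_left_iff_imp]
  exact fun hu => prod_nonneg fun j _ => (hu j).1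

lemma volume_cubeProdGe (d : ℕ) {t : ℝ} (ht0 : 0 ≤ t) (ht1 : t ≤ 1) :
    volume (cubeProdGe d t) = ENNReal.ofReal (cubeProdGeVol d t) := by
  rcases ht0.eq_or_lt with rfl | ht0
  · rw [cubeProdGe_zero, volume_pi_pi]
    simp [cubeProdGeVol]
  induction d generalizing t with
  | zero =>
    have huniv : cubeProdGe 0 t = Set.univ := by simp [cubeProdGe, ht1]
    simp [huniv, cubeProdGeVol, volume_pi]
  | succ d ih =>
    have hIcc : ∀ x ∈ Set.Icc t 1, 0 < t / x ∧ t / x ≤ 1 := fun x hx =>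
      have hx0 := ht0.trans_le hx.1
      ⟨div_pos ht0 hx0, (div_le_one hx0).2 hx.1⟩
    calc volume (cubeProdGe (d + 1) t)
        = ∫⁻ x in Set.Icc t 1, ENNReal.ofReal (cubeProdGeVol d (t / x)) := by
          rw [volume_cubeProdGe_succ d ht0]
          exact setLIntegral_congr_fun measurableSet_Icc fun x hx =>
            ih (hIcc x hx).1.le (hIcc x hx).2 (hIcc x hx).1
      _ = ENNReal.ofReal (∫ x in t..1, cubeProdGeVol d (t / x)) := by
          rw [intervalIntegral.integral_of_le ht1, ← integral_Icc_eq_integral_Ioc,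
            ofReal_integral_eq_lintegral_ofReal]
          · exact ((continuousOn_cubeProdGeVol_div d ht0).mono
              fun x hx => ht0.trans_le hx.1).integrableOn_Icc
          · exact (ae_restrict_iff' measurableSet_Icc).2 <| .of_forall fun x hx =>
              cubeProdGeVol_nonneg d (hIcc x hx).1 (hIcc x hx).2
      _ = ENNReal.ofReal (cubeProdGeVol (d + 1) t) := by
          rw [integral_cubeProdGeVol_div d ht0 ht1]

lemma Aeps_eq_image_mul {d : ℕ} (ε : ℝ) {z : Fin d → ℝ} (hz : ∀ j, z j ∈ Set.Ioc (0 : ℝ) 1) :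
    Aeps d ε z = (z * ·) '' cubeProdGe d (1 - ε / starVol z) := by
  have hV : 0 < starVol z := prod_pos fun j _ => (hz j).1
  have hle_iff (p : ℝ) : 1 - ε / starVol z ≤ p ↔ starVol z - starVol z * p ≤ ε := by
    rw [sub_le_comm, le_div_iff₀ hV, sub_mul, one_mul, mul_comm]
  ext x
  constructor
  · rintro ⟨hx01, hxz, hle⟩
    refine ⟨x / z, ⟨fun j => ⟨div_nonneg (hx01 j).1 (hz j).1.le, (div_le_one (hz j).1).2 (hxz j)⟩,
      ?_⟩, ?_⟩
    · rw [hle_iff, Pi.div_def, prod_div_distrib, ← starVol, ← starVol, mul_div_cancel₀ _ hV.ne']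
      exact hle
    · funext j
      exact mul_div_cancel₀ (x j) (hz j).1.ne'
  · rintro ⟨u, ⟨hu01, hu⟩, rfl⟩
    refine ⟨fun j => ⟨mul_nonneg (hz j).1.le (hu01 j).1, ?_⟩, fun j => ?_, ?_⟩
    · exact mul_le_one₀ (hz j).2 (hu01 j).1 (hu01 j).2
    · exact mul_le_of_le_one_right (hz j).1.le (hu01 j).2
    · have hprod : starVol (z * u) = starVol z * ∏ j, u j := prod_mul_distrib
      rwa [hprod, ← hle_iff]

lemma volume_image_mul_left {d : ℕ} (z : Fin d → ℝ) (s : Set (Fin d → ℝ)) :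
    volume ((z * ·) '' s) = ENNReal.ofReal |∏ j, z j| * volume s := by
  have hf : (z * ·) = ⇑(Matrix.toLin' (Matrix.diagonal z)) := by
    ext u j
    simp [Matrix.mulVec_diagonal]
  rw [hf, Measure.addHaar_image_linearMap, LinearMap.det_toLin', Matrix.det_diagonal]

theorem stmt15_general (d : ℕ) (ε : ℝ) (hε : ε ∈ Set.Ioc (0 : ℝ) 1)
    (z : Fin d → ℝ) (hz : ∀ j, z j ∈ Set.Icc (0 : ℝ) 1) (hV : ε ≤ starVol z) :
    volume (Aeps d ε z) =
      ENNReal.ofReal (starVol z - (starVol z - ε) *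
        ∑ k ∈ Finset.range d,
          (-Real.log (1 - ε / starVol z)) ^ k / (k.factorial : ℝ)) := by
  have hV0 : 0 < starVol z := hε.1.trans_le hV
  have hz_pos : ∀ j, z j ∈ Set.Ioc (0 : ℝ) 1 := fun j =>
    ⟨(hz j).1.lt_of_ne fun h => hV0.ne' (prod_eq_zero (mem_univ j) h.symm), (hz j).2⟩
  have ht0 : 0 ≤ 1 - ε / starVol z := sub_nonneg.2 ((div_le_one hV0).2 hV)
  have ht1 : 1 - ε / starVol z ≤ 1 := sub_le_self _ (div_pos hε.1 hV0).le
  rw [Aeps_eq_image_mul ε hz_pos, volume_image_mul_left, volume_cubeProdGe d ht0 ht1, ← starVol,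
    abs_of_pos hV0, ← ENNReal.ofReal_mul hV0.le, cubeProdGeVol]
  congr 1
  field_simp

/-- For `ε ∈ (0,1]` and `z ∈ [0,1]^d` with `V_z ≥ ε`,
`λ^d(A_ε(z)) = V_z - (V_z - ε)·∑_{k=0}^{d-1} (-ln(1 - ε/V_z))^k / k!`. -/
theorem stmt15 (d : ℕ) (hd : 0 < d) (ε : ℝ) (hε : ε ∈ Set.Ioc (0 : ℝ) 1)
    (z : Fin d → ℝ) (hz : ∀ j, z j ∈ Set.Icc (0 : ℝ) 1) (hV : ε ≤ starVol z) :
    volume (Aeps d ε z) =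
      ENNReal.ofReal (starVol z - (starVol z - ε) *
        ∑ k ∈ Finset.range d,
          (-Real.log (1 - ε / starVol z)) ^ k / (k.factorial : ℝ)) :=
  stmt15_general d ε hε z hz hV
end

section
/- Let d be a positive integer, ε ∈ (0,1], and z ∈ [0,1]^d with V_z ≥ d·ε. Then λ^d(A_ε(z)) ≤ (5/(2·d!)) · ε^d / V_z^{d−1}. -/
open Finset MeasureTheory
open scoped Nat

/-!
Put `t_j = 1 - x_j / z_j` and `δ = ε / V_z ≤ 1 / d`. For `x ∈ A_ε(z)` the `t_j` are nonnegative and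
`exp (-∑ t_j) ≥ ∏ (1 - t_j) = V_x / V_z ≥ 1 - δ`; since `s ≤ sinh s`, this gives
`∑ t_j ≤ ((1 - δ)⁻¹ - (1 - δ)) / 2 ≤ (1 + 1 / (2(d - 1))) δ` for `d ≥ 2` (and `∑ t_j ≤ δ` for
`d = 1`), and `(1 + 1 / (2(d - 1)))^d ≤ (3/2) √e ≤ 5/2`. So the affine map `x ↦ t`, which
multiplies volumes by `1 / V_z`, sends `A_ε(z)` into the simplex `{t ≥ 0, ∑ t_j ≤ cδ}` with
`c^d ≤ 5/2`, of volume `(cδ)^d / d!`.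
-/

def solidSimplex (d : ℕ) (T : ℝ) : Set (Fin d → ℝ) := {v | (∀ j, 0 ≤ v j) ∧ ∑ j, v j ≤ T}

theorem measurableSet_solidSimplex (d : ℕ) (T : ℝ) : MeasurableSet (solidSimplex d T) := by
  simp only [solidSimplex, Set.ofPred_and, Set.ofPred_forall]
  exact (MeasurableSet.iInter fun j =>
    measurableSet_le measurable_const (measurable_pi_apply j)).inter
      (measurableSet_le (by fun_prop) measurable_const)

theorem solidSimplex_eq_empty {d : ℕ} {T : ℝ} (hT : T < 0) : solidSimplex d T = ∅ :=
  Set.eq_empty_of_forall_notMem fun _ hv =>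
    hT.not_ge ((Finset.sum_nonneg fun j _ => hv.1 j).trans hv.2)

theorem cons_mem_solidSimplex_iff {n : ℕ} {T t : ℝ} {w : Fin n → ℝ} :
    (Fin.cons t w : Fin (n + 1) → ℝ) ∈ solidSimplex (n + 1) T ↔
      0 ≤ t ∧ w ∈ solidSimplex n (T - t) := by
  simp only [solidSimplex, Set.mem_ofPred_eq, Fin.forall_fin_succ, Fin.cons_zero, Fin.cons_succ,
    Fin.sum_univ_succ, le_sub_iff_add_le']
  tauto

theorem lintegral_Icc_sub_pow_div_factorial (n : ℕ) {T : ℝ} (hT : 0 ≤ T) :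
    ∫⁻ t in Set.Icc 0 T, ENNReal.ofReal ((T - t) ^ n / n !) =
      ENNReal.ofReal (T ^ (n + 1) / (n + 1)!) := by
  have hint : IntegrableOn (fun t : ℝ => (T - t) ^ n / n !) (Set.Icc 0 T) :=
    (by fun_prop : Continuous fun t : ℝ => (T - t) ^ n / n !).integrableOn_Icc
  have hnonneg : ∀ᵐ t ∂volume.restrict (Set.Icc 0 T), 0 ≤ (T - t) ^ n / n ! :=
    (ae_restrict_mem measurableSet_Icc).mono fun t ht => by
      have := sub_nonneg.2 ht.2; positivity
  rw [← ofReal_integral_eq_lintegral_ofReal hint hnonneg, integral_Icc_eq_integral_Ioc,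
    ← intervalIntegral.integral_of_le hT, intervalIntegral.integral_div,
    intervalIntegral.integral_comp_sub_left (fun x => x ^ n) T, sub_self, sub_zero, integral_pow,
    zero_pow n.succ_ne_zero, sub_zero, Nat.factorial_succ]
  push_cast
  field_simp

theorem volume_solidSimplex_le (d : ℕ) {T : ℝ} (hT : 0 ≤ T) :
    volume (solidSimplex d T) ≤ ENNReal.ofReal (T ^ d / d !) := by
  induction d generalizing T with
  | zero => simp [solidSimplex, hT, volume_pi]
  | succ n ih =>
    let e := MeasurableEquiv.piFinSuccAbove (fun _ : Fin (n + 1) => ℝ) 0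
    have he : ∀ t w, e.symm (t, w) = Fin.cons t w := fun t w => by
      simp [e, MeasurableEquiv.piFinSuccAbove, Fin.consEquiv]
    have hslice : ∀ t, volume (Prod.mk t ⁻¹' (e.symm ⁻¹' solidSimplex (n + 1) T)) ≤
        (Set.Icc 0 T).indicator (fun t => ENNReal.ofReal ((T - t) ^ n / n !)) t := by
      intro t
      have hslice_eq : Prod.mk t ⁻¹' (e.symm ⁻¹' solidSimplex (n + 1) T) =
          {_w | 0 ≤ t} ∩ solidSimplex n (T - t) := by
        ext w; simp only [Set.mem_preimage, he, cons_mem_solidSimplex_iff]; rfl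
      rw [hslice_eq]
      by_cases ht : t ∈ Set.Icc 0 T
      · rw [Set.indicator_of_mem ht]
        exact (measure_mono Set.inter_subset_right).trans (ih (sub_nonneg.2 ht.2))
      · rw [Set.indicator_of_notMem ht]
        rcases lt_or_ge t 0 with ht0 | ht0
        · simp [ht0.not_ge]
        · have hTt : T - t < 0 := by
            simp only [Set.mem_Icc, not_and, not_le] at ht; linarith [ht ht0]
          simp [solidSimplex_eq_empty hTt]
    calc volume (solidSimplex (n + 1) T)
        = volume (e.symm ⁻¹' solidSimplex (n + 1) T) :=
          ((volume_preserving_piFinSuccAbove _ 0).symm.measure_preimage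
            (measurableSet_solidSimplex _ _).nullMeasurableSet).symm
      _ = ∫⁻ t, volume (Prod.mk t ⁻¹' (e.symm ⁻¹' solidSimplex (n + 1) T)) := by
          rw [Measure.volume_eq_prod,
            Measure.prod_apply (e.symm.measurable (measurableSet_solidSimplex _ _))]
      _ ≤ ∫⁻ t, (Set.Icc 0 T).indicator (fun t => ENNReal.ofReal ((T - t) ^ n / n !)) t :=
          lintegral_mono hslice
      _ = ENNReal.ofReal (T ^ (n + 1) / (n + 1)!) := by
          rw [lintegral_indicator measurableSet_Icc, lintegral_Icc_sub_pow_div_factorial n hT]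

theorem volume_preimage_one_sub_div {ι : Type*} [Fintype ι] {z : ι → ℝ} (hz : ∀ j, 0 < z j)
    (s : Set (ι → ℝ)) :
    volume ((fun (x : ι → ℝ) j => 1 - x j / z j) ⁻¹' s) =
      ENNReal.ofReal (∏ j, z j) * volume s := by
  classical
  let f := Matrix.toLin' (Matrix.diagonal fun j => -(z j)⁻¹)
  have hf : (fun (x : ι → ℝ) j => 1 - x j / z j) = (fun y => 1 + y) ∘ f := by
    ext x j
    simp [f, Matrix.mulVec_diagonal, div_eq_inv_mul, sub_eq_add_neg]
  have hdet : LinearMap.det f = ∏ j, -(z j)⁻¹ := by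
    rw [LinearMap.det_toLin', Matrix.det_diagonal]
  have hdet_ne : LinearMap.det f ≠ 0 := by
    rw [hdet]; exact prod_ne_zero_iff.2 fun j _ => neg_ne_zero.2 (inv_ne_zero (hz j).ne')
  rw [hf, Set.preimage_comp, Measure.addHaar_preimage_linearMap _ hdet_ne, measure_preimage_add,
    hdet, ← prod_inv_distrib, abs_prod]
  simp [abs_of_pos (hz _)]

theorem prod_one_sub_le_exp_neg_sum {ι : Type*} (s : Finset ι) {t : ι → ℝ} (ht : ∀ j ∈ s, t j ≤ 1) :
    ∏ j ∈ s, (1 - t j) ≤ Real.exp (-∑ j ∈ s, t j) := by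
  rw [← sum_neg_distrib, Real.exp_sum]
  exact prod_le_prod (fun j hj => sub_nonneg.2 (ht j hj)) fun j _ => Real.one_sub_le_exp_neg _

theorem le_half_inv_sub_of_le_exp_neg {s y : ℝ} (hs : 0 ≤ s) (hy : 0 < y) (h : y ≤ Real.exp (-s)) :
    s ≤ (y⁻¹ - y) / 2 := by
  have hexp : Real.exp s ≤ y⁻¹ := by
    rw [← inv_inv (Real.exp s), ← Real.exp_neg]; exact inv_anti₀ hy h
  calc s ≤ Real.sinh s := Real.self_le_sinh_iff.2 hs
    _ = (Real.exp s - Real.exp (-s)) / 2 := Real.sinh_eq s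
    _ ≤ (y⁻¹ - y) / 2 := by linarith

theorem half_inv_sub_le_of_succ_mul_le {n : ℕ} (hn : 0 < n) {δ : ℝ} (hδ0 : 0 ≤ δ)
    (hδ : (n + 1) * δ ≤ 1) :
    ((1 - δ)⁻¹ - (1 - δ)) / 2 ≤ (1 + 1 / (2 * n)) * δ := by
  have hn' : (0 : ℝ) < n := by exact_mod_cast hn
  have h1 : 0 < 1 - δ := by nlinarith
  field_simp
  nlinarith [mul_nonneg hδ0 (sub_nonneg.2 hδ)]

theorem sum_one_sub_div_le_of_mem_Aeps {d : ℕ} {ε : ℝ} {z x : Fin d → ℝ} (hz : ∀ j, 0 < z j)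
    (hεV : ε < starVol z) (hx : x ∈ Aeps d ε z) :
    ∑ j, (1 - x j / z j) ≤ ((1 - ε / starVol z)⁻¹ - (1 - ε / starVol z)) / 2 := by
  obtain ⟨hx01, hxz, hVx⟩ := hx
  have hV : 0 < starVol z := prod_pos fun j _ => hz j
  refine le_half_inv_sub_of_le_exp_neg
    (sum_nonneg fun j _ => sub_nonneg.2 ((div_le_one (hz j)).2 (hxz j)))
    (by rw [sub_pos, div_lt_one hV]; exact hεV) ?_
  calc 1 - ε / starVol z ≤ starVol x / starVol z := by
        rw [le_div_iff₀ hV, sub_mul, div_mul_cancel₀ _ hV.ne']; linarith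
    _ = ∏ j, (1 - (1 - x j / z j)) := by simp [starVol, prod_div_distrib]
    _ ≤ Real.exp (-∑ j, (1 - x j / z j)) :=
        prod_one_sub_le_exp_neg_sum _ fun j _ => by linarith [div_nonneg (hx01 j).1 (hz j).le]

theorem one_add_inv_two_mul_pow_succ_le {n : ℕ} (hn : 0 < n) :
    (1 + 1 / (2 * n : ℝ)) ^ (n + 1) ≤ 5 / 2 := by
  have hn' : (1 : ℝ) ≤ n := by exact_mod_cast hn
  have hpow : (1 + 1 / (2 * n : ℝ)) ^ n ≤ Real.exp (1 / 2) := by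
    convert Real.one_sub_div_pow_le_exp_neg (n := n) (t := -1 / 2) (by linarith) using 2 <;> ring
  have hexp : Real.exp (1 / 2) ≤ 5 / 3 := by
    have hsq : Real.exp (1 / 2) * Real.exp (1 / 2) = Real.exp 1 := by
      rw [← Real.exp_add]; norm_num
    nlinarith [Real.exp_one_lt_d9, Real.exp_pos (1 / 2)]
  have hlast : 1 + 1 / (2 * n : ℝ) ≤ 3 / 2 := by
    have : 1 / (2 * n : ℝ) ≤ 1 / 2 := by gcongr; linarith
    linarith
  calc (1 + 1 / (2 * n : ℝ)) ^ (n + 1) = (1 + 1 / (2 * n : ℝ)) ^ n * (1 + 1 / (2 * n : ℝ)) :=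
        pow_succ _ _
    _ ≤ 5 / 3 * (3 / 2) := by gcongr; exact hpow.trans hexp
    _ = 5 / 2 := by norm_num

theorem exists_Aeps_subset_preimage_solidSimplex {d : ℕ} (hd : 0 < d) {ε : ℝ} (hε : 0 < ε)
    {z : Fin d → ℝ} (hz : ∀ j, 0 < z j) (hV : d * ε ≤ starVol z) :
    ∃ c : ℝ, 0 ≤ c ∧ c ^ d ≤ 5 / 2 ∧
      Aeps d ε z ⊆ (fun x j => 1 - x j / z j) ⁻¹' solidSimplex d (c * (ε / starVol z)) := by
  have hVpos : 0 < starVol z := prod_pos fun j _ => hz j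
  suffices ∃ c : ℝ, 0 ≤ c ∧ c ^ d ≤ 5 / 2 ∧
      ∀ x ∈ Aeps d ε z, ∑ j, (1 - x j / z j) ≤ c * (ε / starVol z) by
    obtain ⟨c, hc0, hcd, hsum⟩ := this
    exact ⟨c, hc0, hcd, fun x hx =>
      ⟨fun j => sub_nonneg.2 ((div_le_one (hz j)).2 (hx.2.1 j)), hsum x hx⟩⟩
  obtain _ | _ | n := d
  · omega
  · refine ⟨1, zero_le_one, by norm_num, fun x hx => ?_⟩
    have hx0 : z 0 - x 0 ≤ ε := by simpa [starVol] using hx.2.2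
    simpa [starVol, one_sub_div (hz 0).ne'] using div_le_div_of_nonneg_right hx0 (hz 0).le
  · refine ⟨1 + 1 / (2 * ((n + 1 : ℕ) : ℝ)), by positivity,
      one_add_inv_two_mul_pow_succ_le n.succ_pos, fun x hx => ?_⟩
    push_cast at hV
    have hεV : ε < starVol z := by nlinarith
    refine (sum_one_sub_div_le_of_mem_Aeps hz hεV hx).trans
      (half_inv_sub_le_of_succ_mul_le (δ := ε / starVol z) n.succ_pos (by positivity) ?_)
    rw [mul_div_assoc', div_le_one hVpos]
    push_cast
    linarith

/-- For `ε ∈ (0,1]` and `z ∈ [0,1]^d` with `V_z ≥ d·ε`,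
`λ^d(A_ε(z)) ≤ (5/(2·d!))·ε^d/V_z^{d-1}`. -/
theorem stmt17 (d : ℕ) (hd : 0 < d) (ε : ℝ) (hε : ε ∈ Set.Ioc (0 : ℝ) 1)
    (z : Fin d → ℝ) (hz : ∀ j, z j ∈ Set.Icc (0 : ℝ) 1) (hV : (d : ℝ) * ε ≤ starVol z) :
    volume (Aeps d ε z) ≤
      ENNReal.ofReal ((5 / (2 * (d.factorial : ℝ))) * ε ^ d / starVol z ^ (d - 1)) := by
  obtain ⟨hε0, -⟩ := hε
  have hVpos : 0 < starVol z := lt_of_lt_of_le (by positivity) hV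
  have hzpos : ∀ j, 0 < z j := fun j =>
    (hz j).1.lt_of_ne fun h => hVpos.ne' (prod_eq_zero (mem_univ j) h.symm)
  obtain ⟨c, hc0, hcd, hsub⟩ := exists_Aeps_subset_preimage_solidSimplex hd hε0 hzpos hV
  have hscale : starVol z * ((c * (ε / starVol z)) ^ d / d !) =
      c ^ d * (ε ^ d / starVol z ^ (d - 1) / d !) := by
    rw [mul_pow, div_pow, ← pow_sub_one_mul hd.ne' (starVol z)]
    field_simp
  calc volume (Aeps d ε z)
      ≤ volume ((fun x j => 1 - x j / z j) ⁻¹' solidSimplex d (c * (ε / starVol z))) :=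
        measure_mono hsub
    _ = ENNReal.ofReal (starVol z) * volume (solidSimplex d (c * (ε / starVol z))) :=
        volume_preimage_one_sub_div hzpos _
    _ ≤ ENNReal.ofReal (starVol z) * ENNReal.ofReal ((c * (ε / starVol z)) ^ d / d !) := by
        gcongr
        exact volume_solidSimplex_le d (by positivity)
    _ ≤ ENNReal.ofReal ((5 / (2 * (d.factorial : ℝ))) * ε ^ d / starVol z ^ (d - 1)) := by
        rw [← ENNReal.ofReal_mul hVpos.le, hscale]
        refine ENNReal.ofReal_le_ofReal ?_
        calc c ^ d * (ε ^ d / starVol z ^ (d - 1) / d !)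
            ≤ 5 / 2 * (ε ^ d / starVol z ^ (d - 1) / d !) := by gcongr
          _ = 5 / (2 * (d.factorial : ℝ)) * ε ^ d / starVol z ^ (d - 1) := by ring
end
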